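/- arXiv:2004.05421 — 8 statements merged into one kernel-verified Lean document; each statement's English description precedes it below -/
import Mathlib

section
/- Let β ∈ (0,1), α ∈ (1,2), and let l and l_ν be continuous functions from (0,∞) to (0,∞) that are slowly varying at infinity. Then there exist functions ε ↦ ε'(ε) and ε ↦ ε''(ε) from (0,1] to (0,∞) such that, as ε → 0+: ε'(ε) → 0, ε''(ε) → 0, ε''(ε)/ε → 0, (ε''(ε)/ε'(ε)) / ((ε''(ε))^β · l(1/ε''(ε))) → 1, and ε'(ε) · (ε/ε''(ε))^α · l_ν(ε/ε''(ε)) → 1. -/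
/-!
Put `ε' := ε''^(1-β) / l(1/ε'')`, which makes the fourth relation an identity; the last one then
asks for a root `t = ε''` of `g_ε(t) := ε'(t) (ε/t)^α l_ν(ε/t) = 1`.

The logarithm of a continuous slowly varying function, read along `x = e^u`, has increments tending
to `0`, hence grows sublinearly in `u`: `log l(x) / log x → 0`. So `l` lies between `x^(-δ)` and
`x^δ` at infinity for every `δ > 0`. As `α + β > 1` this forces `g_ε(t) → ∞` as `t → 0+`, while
`g_ε(cε) → 0` as `ε → 0+` for each fixed `c > 0`. Taking for `ε''` the least `t ≤ ε` with
`g_ε(t) ≤ 1`, continuity gives `g_ε(ε'') = 1`, and `ε'' ≤ cε` eventually for every `c`.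
-/

open Filter Set Topology Real

lemma exists_abs_le_add_mul_of_abs_sub_le {h : ℝ → ℝ} (hc : Continuous h) {ε X : ℝ}
    (hX : ∀ u ≥ X, |h (u + 1) - h u| ≤ ε) : ∃ C, ∀ u ≥ X, |h u| ≤ C + ε * u := by
  have hε : 0 ≤ ε := (abs_nonneg _).trans (hX X le_rfl)
  obtain ⟨C₀, hC₀⟩ :=
    isCompact_Icc.exists_bound_of_continuousOn (hc.continuousOn (s := Icc X (X + 1)))
  have step : ∀ n : ℕ, ∀ s ∈ Icc X (X + 1), |h (s + n)| ≤ C₀ + ε * n := by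
    intro n
    induction n with
    | zero => intro s hs; simpa using hC₀ s hs
    | succ n ih =>
      intro s hs
      have hsn : X ≤ s + n := by linarith [hs.1, (Nat.cast_nonneg n : (0:ℝ) ≤ n)]
      calc |h (s + ↑(n + 1))| ≤ |h (s + n)| + |h (s + n + 1) - h (s + n)| := by
            rw [Nat.cast_succ, ← add_assoc]
            linarith [abs_sub_abs_le_abs_sub (h (s + n + 1)) (h (s + n))]
        _ ≤ C₀ + ε * n + ε := add_le_add (ih s hs) (hX _ hsn)
        _ = C₀ + ε * ↑(n + 1) := by push_cast; ring
  refine ⟨C₀ - ε * X, fun u hu => ?_⟩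
  set n := ⌊u - X⌋₊
  have hn : (n : ℝ) ≤ u - X := Nat.floor_le (by linarith)
  have hn' : u - X < n + 1 := Nat.lt_floor_add_one _
  have hbound := step n (u - n) ⟨by linarith, by linarith⟩
  rw [sub_add_cancel] at hbound
  calc |h u| ≤ C₀ + ε * n := hbound
    _ ≤ C₀ - ε * X + ε * u := by linarith [mul_le_mul_of_nonneg_left hn hε]

lemma tendsto_div_self_of_tendsto_add_one_sub {h : ℝ → ℝ} (hc : Continuous h)
    (hd : Tendsto (fun u => h (u + 1) - h u) atTop (𝓝 0)) :
    Tendsto (fun u => h u / u) atTop (𝓝 0) := by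
  rw [Metric.tendsto_nhds]
  intro ε hε
  obtain ⟨X, hX⟩ := (hd.eventually (eventually_abs_sub_lt 0 (half_pos hε))).exists_forall_of_atTop
  obtain ⟨C, hC⟩ := exists_abs_le_add_mul_of_abs_sub_le hc
    (ε := ε / 2) (X := X) fun u hu => by simpa using (hX u hu).le
  have hCu : Tendsto (fun u => |C| / u) atTop (𝓝 0) := tendsto_const_nhds.div_atTop tendsto_id
  filter_upwards [hCu.eventually (eventually_lt_nhds (half_pos hε)), eventually_ge_atTop X,
    eventually_gt_atTop 0] with u hCu hXu hu
  rw [Real.dist_eq, sub_zero, abs_div, abs_of_pos hu, div_lt_iff₀ hu]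
  rw [div_lt_iff₀ hu] at hCu
  linarith [hC u hXu, le_abs_self C]

structure IsSlowlyVarying (l : ℝ → ℝ) : Prop where
  pos : ∀ x > 0, 0 < l x
  tendsto_div : ∀ lam > 0, Tendsto (fun x => l (lam * x) / l x) atTop (𝓝 1)

namespace IsSlowlyVarying

variable {l : ℝ → ℝ}

lemma inv (hl : IsSlowlyVarying l) : IsSlowlyVarying fun x => (l x)⁻¹ where
  pos x hx := inv_pos.2 (hl.pos x hx)
  tendsto_div lam hlam := by
    simpa [← mul_inv, div_eq_mul_inv, mul_comm] using (hl.tendsto_div lam hlam).inv₀ one_ne_zero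

lemma tendsto_log_div_log (hl : IsSlowlyVarying l) (hc : ContinuousOn l (Ioi 0)) :
    Tendsto (fun x => log (l x) / log x) atTop (𝓝 0) := by
  have hcont : Continuous fun u => log (l (exp u)) :=
    (hc.comp_continuous continuous_exp exp_pos).log fun u => (hl.pos _ (exp_pos u)).ne'
  have hd : Tendsto (fun u => log (l (exp (u + 1))) - log (l (exp u))) atTop (𝓝 0) := by
    have := ((continuousAt_log one_ne_zero).tendsto.comp
      (hl.tendsto_div (exp 1) (exp_pos 1))).comp tendsto_exp_atTop
    rw [log_one] at this
    refine this.congr fun u => ?_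
    simp only [Function.comp_apply, exp_add, mul_comm (exp u)]
    rw [log_div (hl.pos _ (by positivity)).ne' (hl.pos _ (exp_pos u)).ne']
  refine ((tendsto_div_self_of_tendsto_add_one_sub hcont hd).comp tendsto_log_atTop).congr' ?_
  filter_upwards [eventually_gt_atTop 0] with x hx
  simp [exp_log hx]

lemma tendsto_rpow_mul_atTop (hl : IsSlowlyVarying l) (hc : ContinuousOn l (Ioi 0)) {δ : ℝ}
    (hδ : 0 < δ) : Tendsto (fun x => x ^ δ * l x) atTop atTop := by
  have h : Tendsto (fun x => log x * (δ + log (l x) / log x)) atTop atTop :=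
    tendsto_log_atTop.atTop_mul_pos hδ <| by
      simpa using tendsto_const_nhds.add (hl.tendsto_log_div_log hc)
  refine (tendsto_exp_atTop.comp h).congr' ?_
  filter_upwards [eventually_gt_atTop 1] with x hx
  have hx0 : 0 < x := one_pos.trans hx
  rw [Function.comp_apply, mul_add, mul_div_cancel₀ _ (log_pos hx).ne', exp_add,
    exp_log (hl.pos x hx0), rpow_def_of_pos hx0]

end IsSlowlyVarying

lemma exists_isLeast_le_of_continuousOn {g : ℝ → ℝ} {a b y : ℝ}
    (hg : ContinuousOn g (Ioc a b)) (hlow : ∀ᶠ t in 𝓝[>] a, y < g t) (hab : a < b)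
    (hb : g b ≤ y) : ∃ t₀, IsLeast {t ∈ Ioc a b | g t ≤ y} t₀ ∧ g t₀ = y := by
  set S := {t ∈ Ioc a b | g t ≤ y}
  obtain ⟨u, hau, hu⟩ := mem_nhdsGT_iff_exists_Ioo_subset.1 hlow
  have hS : S = Icc u b ∩ g ⁻¹' Iic y := by
    ext t
    refine ⟨fun ht => ⟨⟨not_lt.1 fun htu => (hu ⟨ht.1.1, htu⟩).not_ge ht.2, ht.1.2⟩, ht.2⟩,
      fun ht => ⟨⟨lt_of_lt_of_le hau ht.1.1, ht.1.2⟩, ht.2⟩⟩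
  have hS_compact : IsCompact S := by
    rw [hS]
    exact isCompact_Icc.of_isClosed_subset ((hg.mono fun t ht => ⟨lt_of_lt_of_le hau ht.1, ht.2⟩)
      |>.preimage_isClosed_of_isClosed isClosed_Icc isClosed_Iic) inter_subset_left
  obtain ⟨t₀, ht₀S, ht₀⟩ := hS_compact.exists_isLeast ⟨b, ⟨hab, le_rfl⟩, hb⟩
  refine ⟨t₀, ⟨ht₀S, ht₀⟩, le_antisymm ht₀S.2 ?_⟩
  have hleft : Tendsto g (𝓝[<] t₀) (𝓝 (g t₀)) := by
    rw [← nhdsWithin_Ioo_eq_nhdsLT ht₀S.1.1]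
    exact (hg t₀ ht₀S.1).mono fun t ht => ⟨ht.1, ht.2.le.trans ht₀S.1.2⟩
  refine ge_of_tendsto hleft ?_
  filter_upwards [Ioo_mem_nhdsLT ht₀S.1.1] with t ht
  exact le_of_not_ge fun hty => (ht₀ ⟨⟨ht.1, ht.2.le.trans ht₀S.1.2⟩, hty⟩).not_gt ht.2

noncomputable def timeScale (β : ℝ) (l : ℝ → ℝ) (t : ℝ) : ℝ :=
  t ^ (1 - β) / l (1 / t)

noncomputable def balance (β α : ℝ) (l lν : ℝ → ℝ) (ε t : ℝ) : ℝ :=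
  timeScale β l t * (ε / t) ^ α * lν (ε / t)

variable {β α : ℝ} {l lν : ℝ → ℝ} {ε t : ℝ}

lemma timeScale_pos (hl : IsSlowlyVarying l) (ht : 0 < t) : 0 < timeScale β l t :=
  div_pos (rpow_pos_of_pos ht _) (hl.pos _ (one_div_pos.2 ht))

lemma timeScale_mul_rpow_mul (hl : IsSlowlyVarying l) (ht : 0 < t) :
    timeScale β l t * (t ^ β * l (1 / t)) = t := by
  have hl_pos := hl.pos _ (one_div_pos.2 ht)
  rw [timeScale, rpow_sub ht, rpow_one]
  field_simp

lemma tendsto_timeScale (hl : IsSlowlyVarying l) (hc : ContinuousOn l (Ioi 0)) (hβ : β < 1) :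
    Tendsto (timeScale β l) (𝓝[>] 0) (𝓝 0) := by
  refine ((hl.tendsto_rpow_mul_atTop hc (sub_pos.2 hβ)).comp tendsto_inv_nhdsGT_zero)
    |>.inv_tendsto_atTop.congr' ?_
  filter_upwards [self_mem_nhdsWithin] with t (ht : 0 < t)
  simp [timeScale, inv_rpow ht.le, div_eq_mul_inv, mul_comm]

lemma continuousOn_balance (hl : IsSlowlyVarying l) (hc : ContinuousOn l (Ioi 0))
    (hcν : ContinuousOn lν (Ioi 0)) (hε : 0 < ε) : ContinuousOn (balance β α l lν ε) (Ioi 0) := by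
  intro t (ht : 0 < t)
  have hinv : ContinuousAt (fun t : ℝ => 1 / t) t := continuousAt_const.div continuousAt_id ht.ne'
  have hdiv : ContinuousAt (fun t : ℝ => ε / t) t := continuousAt_const.div continuousAt_id ht.ne'
  have hl_at : ContinuousAt (fun t => l (1 / t)) t :=
    (hc.continuousAt (Ioi_mem_nhds (one_div_pos.2 ht))).comp hinv
  have hlν_at : ContinuousAt (fun t => lν (ε / t)) t :=
    (hcν.continuousAt (Ioi_mem_nhds (div_pos hε ht))).comp hdiv
  have htime : ContinuousAt (timeScale β l) t :=
    (continuousAt_id.rpow_const (Or.inl ht.ne')).div hl_at (hl.pos _ (one_div_pos.2 ht)).ne'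
  exact ((htime.mul (hdiv.rpow_const (Or.inl (div_pos hε ht).ne'))).mul hlν_at).continuousWithinAt

lemma tendsto_balance_atTop (hl : IsSlowlyVarying l) (hc : ContinuousOn l (Ioi 0))
    (hlν : IsSlowlyVarying lν) (hcν : ContinuousOn lν (Ioi 0)) (hαβ : 1 < α + β) (hε : 0 < ε) :
    Tendsto (balance β α l lν ε) (𝓝[>] 0) atTop := by
  set δ := (α + β - 1) / 2
  have hδ : 0 < δ := by positivity
  have hdiv : Tendsto (fun t => ε / t) (𝓝[>] 0) atTop := by
    simpa [div_eq_mul_inv] using tendsto_inv_nhdsGT_zero.const_mul_atTop hε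
  have hinv : Tendsto (fun t : ℝ => 1 / t) (𝓝[>] 0) atTop := by
    simpa using tendsto_inv_nhdsGT_zero (𝕜 := ℝ)
  have hprod := ((hlν.tendsto_rpow_mul_atTop hcν hδ).comp hdiv).atTop_mul_atTop₀
    ((hl.inv.tendsto_rpow_mul_atTop (hc.inv₀ fun x hx => (hl.pos x hx).ne') hδ).comp hinv)
  refine (hprod.const_mul_atTop (rpow_pos_of_pos hε (α - δ))).congr' ?_
  filter_upwards [self_mem_nhdsWithin] with t (ht : 0 < t)
  have hrpow : t ^ (1 - β) * (ε / t) ^ α = ε ^ (α - δ) * (ε / t) ^ δ * (1 / t) ^ δ := by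
    rw [rpow_def_of_pos ht, rpow_def_of_pos (div_pos hε ht), rpow_def_of_pos hε,
      rpow_def_of_pos (div_pos hε ht), rpow_def_of_pos (one_div_pos.2 ht), ← exp_add, ← exp_add,
      ← exp_add, log_div hε.ne' ht.ne', one_div, log_inv]
    congr 1
    ring
  simp only [Function.comp_apply, balance, timeScale]
  rw [div_mul_eq_mul_div, hrpow]
  ring

lemma tendsto_balance_const_mul (hl : IsSlowlyVarying l) (hc : ContinuousOn l (Ioi 0))
    (hβ : β < 1) {c : ℝ} (hc0 : 0 < c) :
    Tendsto (fun ε => balance β α l lν ε (c * ε)) (𝓝[>] 0) (𝓝 0) := by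
  have hcε : Tendsto (fun ε => c * ε) (𝓝[>] 0) (𝓝[>] 0) := by
    refine tendsto_nhdsWithin_iff.2 ⟨?_, ?_⟩
    · exact ((continuous_const_mul c).tendsto' 0 0 (mul_zero c)).mono_left nhdsWithin_le_nhds
    · filter_upwards [self_mem_nhdsWithin] with ε (hε : 0 < ε) using mul_pos hc0 hε
  have h := ((tendsto_timeScale hl hc hβ).comp hcε).mul_const (c⁻¹ ^ α * lν c⁻¹)
  rw [zero_mul] at h
  refine h.congr' ?_
  filter_upwards [self_mem_nhdsWithin] with ε (hε : 0 < ε)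
  have hεc : ε / (c * ε) = c⁻¹ := by field_simp
  simp only [Function.comp_apply, balance, hεc, mul_assoc]

lemma eventually_balance_const_mul_le_one (hl : IsSlowlyVarying l) (hc : ContinuousOn l (Ioi 0))
    (hβ : β < 1) {c : ℝ} (hc0 : 0 < c) :
    ∀ᶠ ε in 𝓝[>] 0, balance β α l lν ε (c * ε) ≤ 1 :=
  (tendsto_balance_const_mul hl hc hβ hc0).eventually (eventually_le_nhds one_pos)

-- The fallback value `ε` is only taken for `ε` bounded away from `0`.
noncomputable def spaceScale (β α : ℝ) (l lν : ℝ → ℝ) (ε : ℝ) : ℝ :=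
  if balance β α l lν ε ε ≤ 1 then sInf {t ∈ Ioc 0 ε | balance β α l lν ε t ≤ 1} else ε

lemma isLeast_spaceScale (hl : IsSlowlyVarying l) (hc : ContinuousOn l (Ioi 0))
    (hlν : IsSlowlyVarying lν) (hcν : ContinuousOn lν (Ioi 0)) (hαβ : 1 < α + β) (hε : 0 < ε)
    (h1 : balance β α l lν ε ε ≤ 1) :
    IsLeast {t ∈ Ioc 0 ε | balance β α l lν ε t ≤ 1} (spaceScale β α l lν ε) ∧
      balance β α l lν ε (spaceScale β α l lν ε) = 1 := by
  obtain ⟨t₀, hleast, heq⟩ := exists_isLeast_le_of_continuousOn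
    ((continuousOn_balance hl hc hcν hε).mono Ioc_subset_Ioi_self)
    ((tendsto_balance_atTop hl hc hlν hcν hαβ hε).eventually_gt_atTop 1) hε h1
  rw [spaceScale, if_pos h1, hleast.csInf_eq]
  exact ⟨hleast, heq⟩

lemma spaceScale_pos (hl : IsSlowlyVarying l) (hc : ContinuousOn l (Ioi 0))
    (hlν : IsSlowlyVarying lν) (hcν : ContinuousOn lν (Ioi 0)) (hαβ : 1 < α + β) (hε : 0 < ε) :
    0 < spaceScale β α l lν ε := by
  by_cases h1 : balance β α l lν ε ε ≤ 1
  · exact (isLeast_spaceScale hl hc hlν hcν hαβ hε h1).1.1.1.1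
  · rwa [spaceScale, if_neg h1]

lemma eventually_spaceScale_le_const_mul (hl : IsSlowlyVarying l) (hc : ContinuousOn l (Ioi 0))
    (hlν : IsSlowlyVarying lν) (hcν : ContinuousOn lν (Ioi 0)) (hαβ : 1 < α + β) (hβ : β < 1)
    {c : ℝ} (hc0 : 0 < c) (hc1 : c ≤ 1) :
    ∀ᶠ ε in 𝓝[>] 0, spaceScale β α l lν ε ≤ c * ε := by
  filter_upwards [eventually_balance_const_mul_le_one hl hc hβ hc0,
    eventually_balance_const_mul_le_one hl hc hβ one_pos, self_mem_nhdsWithin]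
    with ε hcε h1 (hε : 0 < ε)
  rw [one_mul] at h1
  exact (isLeast_spaceScale hl hc hlν hcν hαβ hε h1).1.2
    ⟨⟨mul_pos hc0 hε, mul_le_of_le_one_left hε.le hc1⟩, hcε⟩

lemma tendsto_spaceScale_div_self (hl : IsSlowlyVarying l) (hc : ContinuousOn l (Ioi 0))
    (hlν : IsSlowlyVarying lν) (hcν : ContinuousOn lν (Ioi 0)) (hαβ : 1 < α + β) (hβ : β < 1) :
    Tendsto (fun ε => spaceScale β α l lν ε / ε) (𝓝[>] 0) (𝓝 0) := by
  refine tendsto_order.2 ⟨fun a ha => ?_, fun a ha => ?_⟩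
  · filter_upwards [self_mem_nhdsWithin] with ε (hε : 0 < ε)
    exact ha.trans (div_pos (spaceScale_pos hl hc hlν hcν hαβ hε) hε)
  · filter_upwards [eventually_spaceScale_le_const_mul hl hc hlν hcν hαβ hβ
      (lt_min (half_pos ha) one_pos) (min_le_right _ _), self_mem_nhdsWithin]
      with ε h (hε : 0 < ε)
    rw [div_lt_iff₀ hε]
    calc spaceScale β α l lν ε ≤ min (a / 2) 1 * ε := h
      _ < a * ε := by gcongr; exact (min_le_left _ _).trans_lt (half_lt_self ha)

lemma tendsto_spaceScale (hl : IsSlowlyVarying l) (hc : ContinuousOn l (Ioi 0))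
    (hlν : IsSlowlyVarying lν) (hcν : ContinuousOn lν (Ioi 0)) (hαβ : 1 < α + β) (hβ : β < 1) :
    Tendsto (spaceScale β α l lν) (𝓝[>] 0) (𝓝[>] 0) := by
  refine tendsto_nhdsWithin_iff.2 ⟨?_, ?_⟩
  · have := (tendsto_spaceScale_div_self hl hc hlν hcν hαβ hβ).mul
      (tendsto_id.mono_left (nhdsWithin_le_nhds (a := (0 : ℝ)) (s := Ioi 0)))
    rw [zero_mul] at this
    refine this.congr' ?_
    filter_upwards [self_mem_nhdsWithin] with ε (hε : 0 < ε)
    exact div_mul_cancel₀ _ hε.ne'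
  · filter_upwards [self_mem_nhdsWithin] with ε hε using spaceScale_pos hl hc hlν hcν hαβ hε

/-- Existence of the time and space rescaling scales `ε'` and `ε''`. -/
theorem stmt_0 (β α : ℝ) (hβ : β ∈ Set.Ioo (0:ℝ) 1) (hα : α ∈ Set.Ioo (1:ℝ) 2)
    (l lν : ℝ → ℝ)
    (hl_cont : ContinuousOn l (Set.Ioi 0)) (hl_pos : ∀ x > (0:ℝ), 0 < l x)
    (hl_sv : ∀ lam > (0:ℝ), Tendsto (fun x => l (lam * x) / l x) atTop (nhds 1))
    (hlν_cont : ContinuousOn lν (Set.Ioi 0)) (hlν_pos : ∀ x > (0:ℝ), 0 < lν x)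
    (hlν_sv : ∀ lam > (0:ℝ), Tendsto (fun x => lν (lam * x) / lν x) atTop (nhds 1)) :
    ∃ e' e'' : ℝ → ℝ,
      (∀ ε ∈ Set.Ioc (0:ℝ) 1, 0 < e' ε ∧ 0 < e'' ε) ∧
      Tendsto e' (nhdsWithin 0 (Set.Ioi 0)) (nhds 0) ∧
      Tendsto e'' (nhdsWithin 0 (Set.Ioi 0)) (nhds 0) ∧
      Tendsto (fun ε => e'' ε / ε) (nhdsWithin 0 (Set.Ioi 0)) (nhds 0) ∧
      Tendsto (fun ε => (e'' ε / e' ε) / ((e'' ε) ^ β * l (1 / e'' ε)))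
        (nhdsWithin 0 (Set.Ioi 0)) (nhds 1) ∧
      Tendsto (fun ε => e' ε * (ε / e'' ε) ^ α * lν (ε / e'' ε))
        (nhdsWithin 0 (Set.Ioi 0)) (nhds 1) := by
  have hl : IsSlowlyVarying l := ⟨hl_pos, hl_sv⟩
  have hlν : IsSlowlyVarying lν := ⟨hlν_pos, hlν_sv⟩
  have hαβ : 1 < α + β := by linarith [hα.1, hβ.1]
  set e'' := spaceScale β α l lν
  have he''_pos : ∀ ε > 0, 0 < e'' ε := fun ε hε =>
    spaceScale_pos hl hl_cont hlν hlν_cont hαβ hε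
  have he'' := tendsto_spaceScale hl hl_cont hlν hlν_cont hαβ hβ.2
  refine ⟨fun ε => timeScale β l (e'' ε), e'',
    fun ε hε => ⟨timeScale_pos hl (he''_pos ε hε.1), he''_pos ε hε.1⟩,
    (tendsto_timeScale hl hl_cont hβ.2).comp he'', he''.mono_right nhdsWithin_le_nhds,
    tendsto_spaceScale_div_self hl hl_cont hlν hlν_cont hαβ hβ.2, ?_, ?_⟩
  · refine tendsto_const_nhds.congr' ?_
    filter_upwards [self_mem_nhdsWithin] with ε (hε : 0 < ε)
    rw [div_div, timeScale_mul_rpow_mul hl (he''_pos ε hε), div_self (he''_pos ε hε).ne']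
  · refine tendsto_const_nhds.congr' ?_
    filter_upwards [eventually_balance_const_mul_le_one hl hl_cont hβ.2 one_pos,
      self_mem_nhdsWithin] with ε h1 (hε : 0 < ε)
    rw [one_mul] at h1
    exact (isLeast_spaceScale hl hl_cont hlν hlν_cont hαβ hε h1).2.symm
end

section
/- For every δ > 0 there exists a constant C > 0 such that for all z > 0 and all ε ∈ (0,1]: ε'(ε)·ν([ε''(ε)z/ε, ∞)) + ε'(ε)·ν((−∞, −ε''(ε)z/ε]) ≤ C · max(z^{−(α−δ)}, z^{−(α+δ)}). -/
/-!
The two-sided tail `T y = ν [y, ∞) + ν (-∞, -y]` is regularly varying of index `-α` at `0`, so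
`T (y / 2) / T y → 2 ^ α`; near `0` the halving ratio therefore lies in
`(2 ^ (α - δ), 2 ^ (α + δ))`, and iterating along dyadic scales gives Potter's bound `T (z * u) ≤ K * max (z ^ (-(α - δ)))
(z ^ (-(α + δ))) * T u` for all small `u` and all `z > 0` (for large `z * u` one uses that `ν` has
bounded support). Taking `u = ε'' / ε`, the scaling hypothesis makes `ε' * T (ε'' / ε)` converge to
`C₊ + C₋`, hence bounded for small `ε`; for `ε` away from `0` continuity and compactness bound
`ε'` above and `ε'' / ε` below.
-/

open Filter Set MeasureTheory Topology

lemma rpow_le_max_rpow_of_mem_Icc {x a b t : ℝ} (hx : 0 < x) (ht : t ∈ Icc a b) :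
    x ^ t ≤ max (x ^ a) (x ^ b) := by
  rcases le_total 1 x with h1 | h1
  · exact (Real.rpow_le_rpow_of_exponent_le h1 ht.2).trans (le_max_right _ _)
  · exact (Real.rpow_le_rpow_of_exponent_ge hx h1 ht.1).trans (le_max_left _ _)

noncomputable def powerWeight (β γ z : ℝ) : ℝ := max (z ^ (-β)) (z ^ (-γ))

lemma powerWeight_pos {β γ z : ℝ} (hz : 0 < z) : 0 < powerWeight β γ z :=
  lt_max_of_lt_left (Real.rpow_pos_of_pos hz _)

lemma powerWeight_mul_le {β γ c z : ℝ} (hc : 0 < c) (hz : 0 < z) :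
    powerWeight β γ (c * z) ≤ powerWeight β γ c * powerWeight β γ z := by
  have hzc := (powerWeight_pos (β := β) (γ := γ) hz).le
  have hcc := (powerWeight_pos (β := β) (γ := γ) hc).le
  unfold powerWeight at *
  rw [Real.mul_rpow hc.le hz.le, Real.mul_rpow hc.le hz.le]
  exact max_le (mul_le_mul (le_max_left _ _) (le_max_left _ _) (by positivity) hcc)
    (mul_le_mul (le_max_right _ _) (le_max_right _ _) (by positivity) hcc)

lemma powerWeight_le_powerWeight {β γ β' γ' z : ℝ} (hz : 0 < z) (hβ : β' ≤ β) (hβγ : β ≤ γ)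
    (hγ : γ ≤ γ') : powerWeight β γ z ≤ powerWeight β' γ' z := by
  rw [powerWeight, powerWeight, max_comm (z ^ (-β'))]
  exact max_le (rpow_le_max_rpow_of_mem_Icc hz ⟨by linarith, by linarith⟩)
    (rpow_le_max_rpow_of_mem_Icc hz ⟨by linarith, by linarith⟩)

section Potter

variable {T : ℝ → ℝ} {y₀ : ℝ}

lemma apply_div_two_pow_le_pow_mul {b : ℝ} (hb : 0 ≤ b)
    (hstep : ∀ y ∈ Ioc 0 y₀, T (y / 2) ≤ b * T y) (n : ℕ) {y : ℝ} (hy : y ∈ Ioc 0 y₀) :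
    T (y / 2 ^ n) ≤ b ^ n * T y := by
  induction n with
  | zero => simp
  | succ n ih =>
    have hyn : y / 2 ^ n ∈ Ioc 0 y₀ :=
      ⟨div_pos hy.1 (by positivity), (div_le_self hy.1.le (one_le_pow₀ one_le_two)).trans hy.2⟩
    calc T (y / 2 ^ (n + 1)) = T (y / 2 ^ n / 2) := by rw [pow_succ, div_div]
      _ ≤ b * T (y / 2 ^ n) := hstep _ hyn
      _ ≤ b * (b ^ n * T y) := mul_le_mul_of_nonneg_left ih hb
      _ = b ^ (n + 1) * T y := by ring

lemma pow_mul_le_apply_div_two_pow {a : ℝ} (ha : 0 ≤ a)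
    (hstep : ∀ y ∈ Ioc 0 y₀, a * T y ≤ T (y / 2)) (n : ℕ) {y : ℝ} (hy : y ∈ Ioc 0 y₀) :
    a ^ n * T y ≤ T (y / 2 ^ n) := by
  -- the upper bound for `-T`
  simpa using apply_div_two_pow_le_pow_mul (T := fun y => -T y) ha
    (fun y hy => by simpa using hstep y hy) n hy

variable {β γ : ℝ}

lemma rpow_mul_le_apply_mul_of_halving (hT : AntitoneOn T (Ioi 0)) (hT0 : ∀ y > 0, 0 ≤ T y)
    (hβ : 0 ≤ β) (hstep : ∀ y ∈ Ioc 0 y₀, 2 ^ β * T y ≤ T (y / 2)) {w z : ℝ}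
    (hw : w ∈ Ioc 0 y₀) (hz : z ∈ Ioc 0 1) : (2 * z) ^ (-β) * T w ≤ T (z * w) := by
  obtain ⟨n, hzn, hnz⟩ := exists_nat_pow_near_of_lt_one hz.1 hz.2 (by norm_num : (0 : ℝ) < 2⁻¹)
    (by norm_num)
  have hz0 := hz.1
  rw [inv_pow] at hzn hnz
  calc (2 * z) ^ (-β) * T w ≤ (2 ^ β) ^ n * T w := by
        gcongr
        · exact hT0 w hw.1
        rw [Real.rpow_pow_comm zero_le_two, ← inv_inv ((2 : ℝ) ^ n), Real.inv_rpow (by positivity),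
          ← Real.rpow_neg (by positivity)]
        refine Real.rpow_le_rpow_of_nonpos (by positivity) ?_ (by linarith)
        rw [pow_succ, mul_inv] at hzn
        linarith
    _ ≤ T (w / 2 ^ n) := pow_mul_le_apply_div_two_pow (by positivity) hstep n hw
    _ ≤ T (z * w) := hT (mem_Ioi.2 (mul_pos hz0 hw.1)) (mem_Ioi.2 (div_pos hw.1 (by positivity)))
        (by rw [div_eq_inv_mul]; exact mul_le_mul_of_nonneg_right hnz hw.1.le)

lemma apply_mul_le_rpow_mul_of_halving (hT : AntitoneOn T (Ioi 0)) (hT0 : ∀ y > 0, 0 ≤ T y)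
    (hγ : 0 ≤ γ) (hstep : ∀ y ∈ Ioc 0 y₀, T (y / 2) ≤ 2 ^ γ * T y) {w z : ℝ}
    (hw : w ∈ Ioc 0 y₀) (hz : z ∈ Ioc 0 1) : T (z * w) ≤ (z / 2) ^ (-γ) * T w := by
  obtain ⟨n, hzn, hnz⟩ := exists_nat_pow_near_of_lt_one hz.1 hz.2 (by norm_num : (0 : ℝ) < 2⁻¹)
    (by norm_num)
  have hz0 := hz.1
  rw [inv_pow] at hzn hnz
  calc T (z * w) ≤ T (w / 2 ^ (n + 1)) :=
        hT (mem_Ioi.2 (div_pos hw.1 (by positivity))) (mem_Ioi.2 (mul_pos hz0 hw.1))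
          (by rw [div_eq_inv_mul]; exact mul_le_mul_of_nonneg_right hzn.le hw.1.le)
    _ ≤ (2 ^ γ) ^ (n + 1) * T w := apply_div_two_pow_le_pow_mul (by positivity) hstep _ hw
    _ ≤ (z / 2) ^ (-γ) * T w := by
        gcongr
        · exact hT0 w hw.1
        rw [Real.rpow_pow_comm zero_le_two, Real.rpow_neg (by positivity),
          ← Real.inv_rpow (by positivity), inv_div]
        gcongr
        rw [le_div_iff₀ hz0, pow_succ]
        calc 2 ^ n * 2 * z ≤ 2 ^ n * 2 * (2 ^ n)⁻¹ := by gcongr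
          _ = 2 := by field_simp

lemma apply_le_rpow_mul_of_halving (hT : AntitoneOn T (Ioi 0)) (hT0 : ∀ y > 0, 0 ≤ T y)
    (hβ : 0 ≤ β) (hstep : ∀ y ∈ Ioc 0 y₀, 2 ^ β * T y ≤ T (y / 2)) {u v : ℝ} (hu : 0 < u)
    (huv : u ≤ v) (hv : v ≤ y₀) : T v ≤ (2 * (u / v)) ^ β * T u := by
  have hv0 : 0 < v := hu.trans_le huv
  have hlow := rpow_mul_le_apply_mul_of_halving hT hT0 hβ hstep ⟨hv0, hv⟩
    ⟨div_pos hu hv0, (div_le_one hv0).2 huv⟩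
  rw [div_mul_cancel₀ _ hv0.ne'] at hlow
  have hr : 0 < 2 * (u / v) := by positivity
  calc T v = (2 * (u / v)) ^ β * ((2 * (u / v)) ^ (-β) * T v) := by
        rw [← mul_assoc, ← Real.rpow_add hr, add_neg_cancel, Real.rpow_zero, one_mul]
    _ ≤ (2 * (u / v)) ^ β * T u := by gcongr

lemma apply_mul_le_rpow_mul_of_one_le (hT : AntitoneOn T (Ioi 0)) (hT0 : ∀ y > 0, 0 ≤ T y)
    {M : ℝ} (hTM : ∀ y > M, T y = 0) (hβ : 0 ≤ β)
    (hstep : ∀ y ∈ Ioc 0 y₀, 2 ^ β * T y ≤ T (y / 2)) {u z : ℝ} (hu : u ∈ Ioc 0 y₀) (hz : 1 ≤ z) :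
    T (z * u) ≤ 2 ^ β * (max M y₀ / y₀) ^ β * z ^ (-β) * T u := by
  have hu0 := hu.1
  have hy₀ : 0 < y₀ := hu0.trans_le hu.2
  have hz0 : 0 < z := one_pos.trans_le hz
  have hM : 1 ≤ max M y₀ / y₀ := (one_le_div hy₀).2 (le_max_right _ _)
  rcases le_or_gt (z * u) y₀ with hzu | hzu
  · calc T (z * u) ≤ (2 * (u / (z * u))) ^ β * T u :=
          apply_le_rpow_mul_of_halving hT hT0 hβ hstep hu0 (le_mul_of_one_le_left hu0.le hz) hzu
      _ = 2 ^ β * 1 * z ^ (-β) * T u := by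
          rw [Real.mul_rpow zero_le_two (by positivity), div_mul_cancel_right₀ hu0.ne',
            Real.inv_rpow hz0.le, ← Real.rpow_neg hz0.le, mul_one]
      _ ≤ _ := by
          gcongr
          · exact hT0 u hu0
          · exact Real.one_le_rpow hM hβ
  -- beyond `y₀` the halving bounds are unavailable: pass through `T y₀`, and use `T = 0` past `M`
  rcases le_or_gt (z * u) M with hzuM | hzuM
  · calc T (z * u) ≤ T y₀ := hT (mem_Ioi.2 hy₀) (mem_Ioi.2 (by positivity)) hzu.le
      _ ≤ (2 * (u / y₀)) ^ β * T u := apply_le_rpow_mul_of_halving hT hT0 hβ hstep hu0 hu.2 le_rfl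
      _ = 2 ^ β * (z * u / y₀) ^ β * z ^ (-β) * T u := by
          rw [Real.mul_rpow zero_le_two (by positivity), Real.div_rpow hu0.le hy₀.le,
            Real.div_rpow (by positivity) hy₀.le, Real.mul_rpow hz0.le hu0.le, Real.rpow_neg hz0.le]
          field_simp
      _ ≤ _ := by
          gcongr
          · exact hT0 u hu0
          · exact hzuM.trans (le_max_left _ _)
  · rw [hTM _ hzuM]
    have := hT0 u hu0
    positivity

lemma exists_potter_bound (hT : AntitoneOn T (Ioi 0)) (hT0 : ∀ y > 0, 0 ≤ T y) {M : ℝ}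
    (hTM : ∀ y > M, T y = 0) (hβ : 0 ≤ β) (hγ : 0 ≤ γ)
    (hstep : ∀ᶠ y in 𝓝[>] 0, 2 ^ β * T y ≤ T (y / 2) ∧ T (y / 2) ≤ 2 ^ γ * T y) :
    ∃ y₀ > 0, ∃ K > 0, ∀ u ∈ Ioc 0 y₀, ∀ z > 0, T (z * u) ≤ K * powerWeight β γ z * T u := by
  obtain ⟨y₀, hy₀, hsub⟩ := mem_nhdsGT_iff_exists_Ioc_subset.1 hstep
  have hM : 0 < (max M y₀ / y₀) ^ β :=
    Real.rpow_pos_of_pos (div_pos (hy₀.trans_le (le_max_right _ _)) hy₀) _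
  refine ⟨y₀, hy₀, 2 ^ γ + 2 ^ β * (max M y₀ / y₀) ^ β, by positivity, fun u hu z hz => ?_⟩
  have hTu := hT0 u hu.1
  have hΦ : 0 ≤ powerWeight β γ z := (powerWeight_pos hz).le
  rcases le_total z 1 with hz1 | hz1
  · calc T (z * u) ≤ (z / 2) ^ (-γ) * T u :=
          apply_mul_le_rpow_mul_of_halving hT hT0 hγ (fun y hy => (hsub hy).2) hu ⟨hz, hz1⟩
      _ = 2 ^ γ * z ^ (-γ) * T u := by
          rw [Real.div_rpow hz.le zero_le_two, Real.rpow_neg zero_le_two, div_inv_eq_mul,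
            mul_comm (z ^ (-γ))]
      _ ≤ _ := by
          refine mul_le_mul_of_nonneg_right (mul_le_mul ?_ (le_max_right _ _) (by positivity)
            (by positivity)) hTu
          exact le_add_of_nonneg_right (by positivity)
  · calc T (z * u) ≤ 2 ^ β * (max M y₀ / y₀) ^ β * z ^ (-β) * T u :=
          apply_mul_le_rpow_mul_of_one_le hT hT0 hTM hβ (fun y hy => (hsub hy).1) hu hz1
      _ ≤ _ := by
          refine mul_le_mul_of_nonneg_right (mul_le_mul ?_ (le_max_left _ _) (by positivity)
            (by positivity)) hTu
          exact le_add_of_nonneg_left (by positivity)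

end Potter

lemma eventually_mul_le_and_le_mul_of_tendsto_div {ι : Type*} {F : Filter ι} {f g : ι → ℝ}
    {L a b : ℝ} (h : Tendsto (fun i => g i / f i) F (𝓝 L)) (hf : ∀ᶠ i in F, 0 < f i)
    (ha : a < L) (hb : L < b) : ∀ᶠ i in F, a * f i ≤ g i ∧ g i ≤ b * f i := by
  filter_upwards [h.eventually_const_lt ha, h.eventually_lt_const hb, hf] with i hai hbi hfi
  exact ⟨(le_div_iff₀ hfi).1 hai.le, (div_le_iff₀ hfi).1 hbi.le⟩

section RegularVariation

variable {f l : ℝ → ℝ} {α A : ℝ}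

lemma eventually_pos_of_tendsto_rpow_mul_div (hA : 0 < A) (hl : ∀ x > 0, 0 < l x)
    (hf : Tendsto (fun y => y ^ α * f y / l (1 / y)) (𝓝[>] 0) (𝓝 A)) :
    ∀ᶠ y in 𝓝[>] 0, 0 < f y := by
  filter_upwards [hf.eventually_const_lt hA, self_mem_nhdsWithin] with y hy (hy0 : 0 < y)
  have hl' := hl (1 / y) (by positivity)
  exact (mul_pos_iff_of_pos_left (Real.rpow_pos_of_pos hy0 α)).1
    ((div_pos_iff_of_pos_right hl').1 hy)

lemma tendsto_apply_mul_div_of_tendsto_rpow_mul_div {c : ℝ} (hA : 0 < A) (hc : 0 < c)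
    (hl : ∀ x > 0, 0 < l x) (hsv : Tendsto (fun x => l (c⁻¹ * x) / l x) atTop (𝓝 1))
    (hf : Tendsto (fun y => y ^ α * f y / l (1 / y)) (𝓝[>] 0) (𝓝 A)) :
    Tendsto (fun y => f (c * y) / f y) (𝓝[>] 0) (𝓝 (c ^ (-α))) := by
  have hcy : Tendsto (c * ·) (𝓝[>] 0) (𝓝[>] 0) :=
    tendsto_iff_comap.2 (comap_mulLeft_nhdsGT_zero hc).ge
  have hlim := (((hf.comp hcy).div hf hA.ne').mul (hsv.comp tendsto_inv_nhdsGT_zero)).mul_const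
    (c ^ (-α))
  rw [div_self hA.ne', one_mul, one_mul] at hlim
  refine hlim.congr' ?_
  filter_upwards [eventually_pos_of_tendsto_rpow_mul_div hA hl hf, self_mem_nhdsWithin]
    with y hfy (hy : 0 < y)
  have hl₁ := hl (1 / y) (by positivity)
  have hl₂ := hl (1 / (c * y)) (by positivity)
  have hcα : 0 < c ^ α := Real.rpow_pos_of_pos hc α
  have hyα : 0 < y ^ α := Real.rpow_pos_of_pos hy α
  simp only [Function.comp_apply, Pi.div_apply]
  rw [Real.mul_rpow hc.le hy.le, Real.rpow_neg hc.le, ← mul_inv, ← one_div, ← one_div]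
  field_simp

lemma eventually_halving_bounds_of_tendsto_rpow_mul_div {β γ : ℝ} (hA : 0 < A)
    (hl : ∀ x > 0, 0 < l x) (hsv : Tendsto (fun x => l (2 * x) / l x) atTop (𝓝 1))
    (hf : Tendsto (fun y => y ^ α * f y / l (1 / y)) (𝓝[>] 0) (𝓝 A)) (hβ : β < α) (hγ : α < γ) :
    ∀ᶠ y in 𝓝[>] 0, 2 ^ β * f y ≤ f (y / 2) ∧ f (y / 2) ≤ 2 ^ γ * f y := by
  have hratio : Tendsto (fun y => f (y / 2) / f y) (𝓝[>] 0) (𝓝 (2 ^ α)) := by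
    simpa only [inv_mul_eq_div, Real.inv_rpow zero_le_two, Real.rpow_neg zero_le_two, inv_inv]
      using tendsto_apply_mul_div_of_tendsto_rpow_mul_div hA (inv_pos.2 two_pos) hl
        (by simpa only [inv_inv] using hsv) hf
  exact eventually_mul_le_and_le_mul_of_tendsto_div hratio
    (eventually_pos_of_tendsto_rpow_mul_div hA hl hf)
    (Real.rpow_lt_rpow_of_exponent_lt one_lt_two hβ)
    (Real.rpow_lt_rpow_of_exponent_lt one_lt_two hγ)

lemma tendsto_mul_apply_of_tendsto_rpow_mul_div {ι : Type*} {F : Filter ι} {a u : ι → ℝ}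
    (hl : ∀ x > 0, 0 < l x)
    (hf : Tendsto (fun y => y ^ α * f y / l (1 / y)) (𝓝[>] 0) (𝓝 A))
    (hu : Tendsto u F (𝓝[>] 0))
    (ha : Tendsto (fun i => a i * (1 / u i) ^ α * l (1 / u i)) F (𝓝 1)) :
    Tendsto (fun i => a i * f (u i)) F (𝓝 A) := by
  have hlim := ha.mul (hf.comp hu)
  rw [one_mul] at hlim
  refine hlim.congr' ?_
  filter_upwards [hu.eventually self_mem_nhdsWithin] with i (hui : 0 < u i)
  have hl' := hl (1 / u i) (by positivity)
  have huα : 0 < u i ^ α := Real.rpow_pos_of_pos hui α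
  simp only [Function.comp_apply]
  rw [Real.div_rpow zero_le_one hui.le, Real.one_rpow]
  field_simp

end RegularVariation

section PotterBound

variable {T a u : ℝ → ℝ} {β γ y₀ K : ℝ}

lemma exists_bound_on_compact_of_potter (hT : AntitoneOn T (Ioi 0)) (hT0 : ∀ y > 0, 0 ≤ T y)
    (hy₀ : 0 < y₀) (hK : 0 ≤ K)
    (hpotter : ∀ v ∈ Ioc 0 y₀, ∀ z > 0, T (z * v) ≤ K * powerWeight β γ z * T v)
    {s : Set ℝ} (hs : IsCompact s) (hne : s.Nonempty) (ha : ContinuousOn a s)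
    (hu : ContinuousOn u s) (ha0 : ∀ ε ∈ s, 0 ≤ a ε) (hu0 : ∀ ε ∈ s, 0 < u ε) :
    ∃ C ≥ 0, ∀ z > 0, ∀ ε ∈ s, a ε * T (z * u ε) ≤ C * powerWeight β γ z := by
  obtain ⟨εa, hεa, ha_max⟩ := hs.exists_isMaxOn hne ha
  obtain ⟨εu, hεu, hu_min⟩ := hs.exists_isMinOn hne hu
  have hm : 0 < u εu / y₀ := div_pos (hu0 εu hεu) hy₀
  have hfar : 0 ≤ a εa * K * powerWeight β γ (u εu / y₀) * T y₀ :=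
    mul_nonneg (mul_nonneg (mul_nonneg (ha0 εa hεa) hK) (powerWeight_pos hm).le) (hT0 y₀ hy₀)
  refine ⟨_, hfar, fun z hz ε hε => ?_⟩
  have hΦ := (powerWeight_pos (β := β) (γ := γ) hz).le
  have hzu : 0 < z * u ε := mul_pos hz (hu0 ε hε)
  calc a ε * T (z * u ε) ≤ a εa * T (z * (u εu / y₀) * y₀) := by
        rw [mul_assoc, div_mul_cancel₀ _ hy₀.ne']
        exact mul_le_mul (ha_max hε) (hT (mem_Ioi.2 (mul_pos hz (hu0 εu hεu))) (mem_Ioi.2 hzu)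
          (mul_le_mul_of_nonneg_left (hu_min hε) hz.le)) (hT0 _ hzu) (ha0 εa hεa)
    _ ≤ a εa * (K * powerWeight β γ (z * (u εu / y₀)) * T y₀) := by
        gcongr
        · exact ha0 εa hεa
        · exact hpotter y₀ ⟨hy₀, le_rfl⟩ _ (mul_pos hz hm)
    _ ≤ a εa * (K * (powerWeight β γ z * powerWeight β γ (u εu / y₀)) * T y₀) := by
        gcongr
        · exact ha0 εa hεa
        · exact hT0 y₀ hy₀
        · exact powerWeight_mul_le hz hm
    _ = _ := by ring

lemma exists_bound_of_potter {B : ℝ} (hT : AntitoneOn T (Ioi 0)) (hT0 : ∀ y > 0, 0 ≤ T y)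
    (hy₀ : 0 < y₀) (hK : 0 < K)
    (hpotter : ∀ v ∈ Ioc 0 y₀, ∀ z > 0, T (z * v) ≤ K * powerWeight β γ z * T v)
    (ha : ContinuousOn a (Ioc 0 1)) (hu : ContinuousOn u (Ioc 0 1))
    (ha0 : ∀ ε ∈ Ioc (0 : ℝ) 1, 0 ≤ a ε) (hu0 : ∀ ε ∈ Ioc (0 : ℝ) 1, 0 < u ε)
    (hu_lim : Tendsto u (𝓝[>] 0) (𝓝 0)) (haT : ∀ᶠ ε in 𝓝[>] 0, a ε * T (u ε) ≤ B) :
    ∃ C > 0, ∀ z > 0, ∀ ε ∈ Ioc (0 : ℝ) 1, a ε * T (z * u ε) ≤ C * powerWeight β γ z := by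
  obtain ⟨ε₁, hε₁, hsmall⟩ :=
    mem_nhdsGT_iff_exists_Ioo_subset.1 (haT.and (hu_lim.eventually_le_const hy₀))
  set ε₀ := min ε₁ 1
  have hIcc : Icc ε₀ 1 ⊆ Ioc 0 1 := fun ε hε => ⟨(lt_min hε₁ one_pos).trans_le hε.1, hε.2⟩
  obtain ⟨C, hC, hlarge⟩ := exists_bound_on_compact_of_potter hT hT0 hy₀ hK.le hpotter
    isCompact_Icc (nonempty_Icc.2 (min_le_right _ _)) (ha.mono hIcc) (hu.mono hIcc)
    (fun ε hε => ha0 ε (hIcc hε)) (fun ε hε => hu0 ε (hIcc hε))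
  refine ⟨K * max B 1 + C, by positivity, fun z hz ε hε => ?_⟩
  have hΦ := (powerWeight_pos (β := β) (γ := γ) hz).le
  rcases lt_or_ge ε ε₀ with hεs | hεl
  · obtain ⟨haTε, huε⟩ := hsmall ⟨hε.1, hεs.trans_le (min_le_left _ _)⟩
    calc a ε * T (z * u ε) ≤ a ε * (K * powerWeight β γ z * T (u ε)) :=
          mul_le_mul_of_nonneg_left (hpotter _ ⟨hu0 ε hε, huε⟩ z hz) (ha0 ε hε)
      _ = K * powerWeight β γ z * (a ε * T (u ε)) := by ring
      _ ≤ K * powerWeight β γ z * max B 1 := by gcongr; exact haTε.trans (le_max_left _ _)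
      _ ≤ _ := by rw [add_mul, mul_right_comm]; exact le_add_of_nonneg_right (mul_nonneg hC hΦ)
  · calc a ε * T (z * u ε) ≤ C * powerWeight β γ z := hlarge z hz ε ⟨hεl, hε.2⟩
      _ ≤ _ := by gcongr; exact le_add_of_nonneg_left (by positivity)

end PotterBound

noncomputable def twoSidedTail (ν : Measure ℝ) (y : ℝ) : ℝ := ν.real (Ici y) + ν.real (Iic (-y))

section TwoSidedTail

variable {ν : Measure ℝ}

lemma twoSidedTail_nonneg (y : ℝ) : 0 ≤ twoSidedTail ν y :=
  add_nonneg measureReal_nonneg measureReal_nonneg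

lemma twoSidedTail_antitoneOn (hfin : ∀ c > (0 : ℝ), ν (Ioo (-c) c)ᶜ ≠ ⊤) :
    AntitoneOn (twoSidedTail ν) (Ioi 0) := by
  intro a (ha : 0 < a) b _ hab
  have hfin' : ∀ s ⊆ (Ioo (-a) a)ᶜ, ν s ≠ ⊤ := fun s hs =>
    ne_top_of_le_ne_top (hfin a ha) (measure_mono hs)
  exact add_le_add
    (measureReal_mono (Ici_subset_Ici.2 hab) (hfin' _ fun x hx hx' => (not_lt.2 hx) hx'.2))
    (measureReal_mono (Iic_subset_Iic.2 (neg_le_neg hab))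
      (hfin' _ fun x hx hx' => (not_lt.2 hx) hx'.1))

lemma twoSidedTail_eq_zero {M y : ℝ} (hM : ν (Icc (-M) M)ᶜ = 0) (hy : M < y) :
    twoSidedTail ν y = 0 := by
  have hIci : Ici y ⊆ (Icc (-M) M)ᶜ := fun x hx hx' => (hy.trans_le hx).not_ge hx'.2
  have hIic : Iic (-y) ⊆ (Icc (-M) M)ᶜ := fun x hx hx' =>
    (hx.trans_lt (neg_lt_neg hy)).not_ge hx'.1
  simp [twoSidedTail, measureReal_def, measure_mono_null hIci hM, measure_mono_null hIic hM]

end TwoSidedTail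

theorem stmt_2_general (α Cp Cm M : ℝ) (hα : α ∈ Set.Ioo (1:ℝ) 2)
    (hCpm : 0 < Cp + Cm)
    (ν : Measure ℝ)
    (hνM : ν ((Set.Icc (-M) M)ᶜ) = 0)
    (hνfin : ∀ c > (0:ℝ), ν ((Set.Ioo (-c) c)ᶜ) ≠ ⊤)
    (lν : ℝ → ℝ)
    (hlν_pos : ∀ x > (0:ℝ), 0 < lν x)
    (hlν_sv : ∀ lam > (0:ℝ), Tendsto (fun x => lν (lam * x) / lν x) atTop (nhds 1))
    (htail_p : Tendsto (fun z => z ^ α * (ν (Set.Ici z)).toReal / lν (1 / z))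
      (nhdsWithin 0 (Set.Ioi 0)) (nhds Cp))
    (htail_m : Tendsto (fun z => z ^ α * (ν (Set.Iic (-z))).toReal / lν (1 / z))
      (nhdsWithin 0 (Set.Ioi 0)) (nhds Cm))
    (e' e'' : ℝ → ℝ)
    (he'_cont : ContinuousOn e' (Set.Ioc 0 1)) (he''_cont : ContinuousOn e'' (Set.Ioc 0 1))
    (hpos : ∀ ε ∈ Set.Ioc (0:ℝ) 1, 0 < e' ε ∧ 0 < e'' ε)
    (he''e : Tendsto (fun ε => e'' ε / ε) (nhdsWithin 0 (Set.Ioi 0)) (nhds 0))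
    (hscale : Tendsto (fun ε => e' ε * (ε / e'' ε) ^ α * lν (ε / e'' ε))
      (nhdsWithin 0 (Set.Ioi 0)) (nhds 1)) :
    ∀ δ > (0:ℝ), ∃ C > (0:ℝ), ∀ z > (0:ℝ), ∀ ε ∈ Set.Ioc (0:ℝ) 1,
      e' ε * (ν (Set.Ici (e'' ε * z / ε))).toReal
          + e' ε * (ν (Set.Iic (-(e'' ε * z / ε)))).toReal
        ≤ C * max (z ^ (-(α - δ))) (z ^ (-(α + δ))) := by
  intro δ hδ
  -- shrinking `δ` only weakens the bound, and `δ ≤ α` keeps the exponent `α - δ` nonnegative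
  have hα0 : 0 < α := one_pos.trans hα.1
  set δ' := min δ α
  have hδ' : 0 < δ' := lt_min hδ hα0
  set T := twoSidedTail ν
  have hT := twoSidedTail_antitoneOn hνfin
  have hT0 : ∀ y > 0, 0 ≤ T y := fun y _ => twoSidedTail_nonneg y
  have htail : Tendsto (fun y => y ^ α * T y / lν (1 / y)) (𝓝[>] 0) (𝓝 (Cp + Cm)) :=
    (htail_p.add htail_m).congr fun y => by simp only [T, twoSidedTail, measureReal_def]; ring
  obtain ⟨y₀, hy₀, K, hK, hpotter⟩ := exists_potter_bound hT hT0
    (fun y => twoSidedTail_eq_zero hνM) (sub_nonneg.2 (min_le_right δ α)) (by positivity)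
    (eventually_halving_bounds_of_tendsto_rpow_mul_div hCpm hlν_pos (hlν_sv 2 two_pos) htail
      (sub_lt_self α hδ') (lt_add_of_pos_right α hδ'))
  have hu : Tendsto (fun ε => e'' ε / ε) (𝓝[>] 0) (𝓝[>] 0) :=
    tendsto_nhdsWithin_iff.2 ⟨he''e, eventually_of_mem (Ioo_mem_nhdsGT one_pos) fun ε hε =>
      div_pos (hpos ε ⟨hε.1, hε.2.le⟩).2 hε.1⟩
  have hlim := tendsto_mul_apply_of_tendsto_rpow_mul_div hlν_pos htail hu
    (by simpa only [one_div_div] using hscale)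
  obtain ⟨C, hC, hbound⟩ := exists_bound_of_potter hT hT0 hy₀ hK hpotter he'_cont
    (he''_cont.div continuousOn_id fun ε hε => hε.1.ne') (fun ε hε => (hpos ε hε).1.le)
    (fun ε hε => div_pos (hpos ε hε).2 hε.1) he''e (hlim.eventually_le_const (lt_add_one _))
  refine ⟨C, hC, fun z hz ε hε => ?_⟩
  calc _ = e' ε * T (z * (e'' ε / ε)) := by
        rw [show e'' ε * z / ε = z * (e'' ε / ε) by ring]
        simp only [T, twoSidedTail, measureReal_def]
        ring
    _ ≤ C * powerWeight (α - δ') (α + δ') z := hbound z hz ε hε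
    _ ≤ C * powerWeight (α - δ) (α + δ) z := by
        gcongr
        exact powerWeight_le_powerWeight hz (by linarith [min_le_left δ α]) (by linarith)
          (by linarith [min_le_left δ α])

/-- Uniform polynomial bound for the rescaled tails of the Lévy measure. -/
theorem stmt_2 (α Cp Cm M : ℝ) (hα : α ∈ Set.Ioo (1:ℝ) 2)
    (hCp : 0 ≤ Cp) (hCm : 0 ≤ Cm) (hCpm : 0 < Cp + Cm) (hM : 0 < M)
    (ν : Measure ℝ)
    (hν0 : ν {0} = 0)
    (hνM : ν ((Set.Icc (-M) M)ᶜ) = 0)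
    (hνMpt : ν {-M, M} = 0)
    (hνfin : ∀ c > (0:ℝ), ν ((Set.Ioo (-c) c)ᶜ) ≠ ⊤)
    (lν : ℝ → ℝ)
    (hlν_cont : ContinuousOn lν (Set.Ioi 0)) (hlν_pos : ∀ x > (0:ℝ), 0 < lν x)
    (hlν_sv : ∀ lam > (0:ℝ), Tendsto (fun x => lν (lam * x) / lν x) atTop (nhds 1))
    (htail_p : Tendsto (fun z => z ^ α * (ν (Set.Ici z)).toReal / lν (1 / z))
      (nhdsWithin 0 (Set.Ioi 0)) (nhds Cp))
    (htail_m : Tendsto (fun z => z ^ α * (ν (Set.Iic (-z))).toReal / lν (1 / z))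
      (nhdsWithin 0 (Set.Ioi 0)) (nhds Cm))
    (e' e'' : ℝ → ℝ)
    (he'_cont : ContinuousOn e' (Set.Ioc 0 1)) (he''_cont : ContinuousOn e'' (Set.Ioc 0 1))
    (hpos : ∀ ε ∈ Set.Ioc (0:ℝ) 1, 0 < e' ε ∧ 0 < e'' ε)
    (he' : Tendsto e' (nhdsWithin 0 (Set.Ioi 0)) (nhds 0))
    (he'' : Tendsto e'' (nhdsWithin 0 (Set.Ioi 0)) (nhds 0))
    (he''e : Tendsto (fun ε => e'' ε / ε) (nhdsWithin 0 (Set.Ioi 0)) (nhds 0))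
    (hscale : Tendsto (fun ε => e' ε * (ε / e'' ε) ^ α * lν (ε / e'' ε))
      (nhdsWithin 0 (Set.Ioi 0)) (nhds 1)) :
    ∀ δ > (0:ℝ), ∃ C > (0:ℝ), ∀ z > (0:ℝ), ∀ ε ∈ Set.Ioc (0:ℝ) 1,
      e' ε * (ν (Set.Ici (e'' ε * z / ε))).toReal
          + e' ε * (ν (Set.Iic (-(e'' ε * z / ε)))).toReal
        ≤ C * max (z ^ (-(α - δ))) (z ^ (-(α + δ))) :=
  stmt_2_general α Cp Cm M hα hCpm ν hνM hνfin lν hlν_pos hlν_sv htail_p htail_m e' e'' he'_cont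
    he''_cont hpos he''e hscale
end

section
/- For every γ ∈ (0,β) there exists a constant K_γ > 0 such that for all ε ∈ (0,1] and all x ≥ 1, a_ε(x) ≥ K_γ·x^{β−γ}, where a_ε(x) := (ε'(ε)/ε''(ε))·a(ε''(ε)·x). -/
/-!
Write `s = ε''(ε)`. The hypothesis on the scales, together with continuity on `(0, 1]`, makes
`ε'/ε''` comparable to `1 / (s^β l(1/s))` uniformly in `ε`, so it suffices to show
`a(s x) ≥ c x^(β-γ) s^β l(1/s)` for `s` in a bounded range and `x ≥ 1`. For `s x ≤ 1` this follows
from `L₊(s x) ≳ l(1/(s x))` and Potter's bound `l(1/s) ≤ C x^γ l(1/(s x))`; for `s x > 1` from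
Potter's bound against a fixed base point.

Potter's bound comes from the uniform convergence theorem for `h = log ∘ l ∘ exp`, proved by a
Steinhaus-type measure argument: the shifts `v` with `|h(u + v) - h u| ≤ ε` for all large `u` fill
most of `[0, 2]`, so every `x ∈ [1, 2]` splits as `v + (x - v)` with both summands such shifts.
-/

open Filter Set MeasureTheory Topology

lemma volume_preimage_const_sub (x : ℝ) (S : Set ℝ) :
    volume ((fun v => x - v) ⁻¹' S) = volume S := by
  have : (fun v : ℝ => x - v) ⁻¹' S = Neg.neg ⁻¹' ((fun w => x + w) ⁻¹' S) := by
    ext v; simp [sub_eq_add_neg]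
  rw [this, Measure.measure_preimage_neg, measure_preimage_add]

lemma exists_mem_and_sub_mem_of_volume_diff_lt {E : Set ℝ} {x : ℝ}
    (hE : volume (Icc 0 x \ E) < ENNReal.ofReal (x / 2)) :
    ∃ v ∈ Icc 0 x, v ∈ E ∧ x - v ∈ E := by
  by_contra! hne
  set S := Icc 0 x \ E
  have hcover : Icc 0 x ⊆ S ∪ (fun v => x - v) ⁻¹' S := by
    intro v hv
    by_cases hvE : v ∈ E
    · exact Or.inr ⟨⟨by linarith [hv.2], by linarith [hv.1]⟩, hne v hv hvE⟩
    · exact Or.inl ⟨hv, hvE⟩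
  have hx : 0 ≤ x / 2 := by
    by_contra! hx
    simp [ENNReal.ofReal_of_nonpos hx.le] at hE
  refine (measure_mono (μ := volume) hcover).not_gt ?_
  calc volume (S ∪ (fun v => x - v) ⁻¹' S)
      ≤ volume S + volume S :=
        (measure_union_le _ _).trans_eq (by rw [volume_preimage_const_sub])
    _ < ENNReal.ofReal (x / 2) + ENNReal.ofReal (x / 2) := ENNReal.add_lt_add hE hE
    _ = volume (Icc 0 x) := by
      rw [← ENNReal.ofReal_add hx hx, add_halves, Real.volume_Icc, sub_zero]

section AdditiveForm

variable {h : ℝ → ℝ}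

lemma tendsto_volume_diff_setOf_forall_abs_sub_le (hh : Continuous h)
    (hlim : ∀ v, Tendsto (fun u => h (u + v) - h u) atTop (𝓝 0)) {ε : ℝ} (hε : 0 < ε)
    {s : Set ℝ} (hs : MeasurableSet s) (hs_fin : volume s ≠ ⊤) :
    Tendsto (fun n : ℕ => volume (s \ {v | ∀ u ≥ (n : ℝ), |h (u + v) - h u| ≤ ε}))
      atTop (𝓝 0) := by
  set E : ℕ → Set ℝ := fun n => {v | ∀ u ≥ (n : ℝ), |h (u + v) - h u| ≤ ε}
  have hclosed : ∀ n, IsClosed (E n) := fun n => by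
    simp only [E, ofPred_forall]
    exact isClosed_iInter fun u => isClosed_iInter fun _ =>
      isClosed_le (by fun_prop) (by fun_prop)
  have hanti : Antitone fun n => s \ E n := fun m k hmk =>
    sdiff_subset_sdiff_right fun v hv u hu => hv u (le_trans (by exact_mod_cast hmk) hu)
  have hempty : ⋂ n, s \ E n = ∅ := by
    refine eq_empty_of_forall_notMem fun v hv => ?_
    obtain ⟨N, hN⟩ := eventually_atTop.mp
      ((hlim v).eventually (Metric.closedBall_mem_nhds 0 hε))
    obtain ⟨n, hn⟩ := exists_nat_ge N
    refine (mem_iInter.mp hv n).2 fun u hu => ?_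
    simpa [Real.dist_eq] using hN u (hn.trans hu)
  have := tendsto_measure_iInter_atTop
    (fun n => (hs.diff (hclosed n).measurableSet).nullMeasurableSet) hanti
    ⟨0, ((measure_mono sdiff_subset).trans_lt hs_fin.lt_top).ne⟩
  rwa [hempty, measure_empty] at this

lemma exists_forall_Icc_abs_sub_le (hh : Continuous h)
    (hlim : ∀ v, Tendsto (fun u => h (u + v) - h u) atTop (𝓝 0)) {ε : ℝ} (hε : 0 < ε) :
    ∃ n : ℝ, ∀ u ≥ n, ∀ x ∈ Icc (1 : ℝ) 2, |h (u + x) - h u| ≤ ε := by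
  obtain ⟨n, hn⟩ := ((tendsto_volume_diff_setOf_forall_abs_sub_le hh hlim (half_pos hε)
    measurableSet_Icc (s := Icc 0 2) (by simp)).eventually
      (gt_mem_nhds (ENNReal.ofReal_pos.mpr one_half_pos))).exists
  refine ⟨n, fun u hu x hx => ?_⟩
  obtain ⟨v, hv, hvE, hxvE⟩ := exists_mem_and_sub_mem_of_volume_diff_lt (x := x)
    (E := {v | ∀ u ≥ (n : ℝ), |h (u + v) - h u| ≤ ε / 2}) <| calc
      _ ≤ volume (Icc 0 2 \ {v | ∀ u ≥ (n : ℝ), |h (u + v) - h u| ≤ ε / 2}) :=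
        measure_mono (sdiff_subset_sdiff_left (Icc_subset_Icc_right hx.2))
      _ < ENNReal.ofReal (1 / 2) := hn
      _ ≤ ENNReal.ofReal (x / 2) := ENNReal.ofReal_le_ofReal (by linarith [hx.1])
  calc |h (u + x) - h u| = |(h (u + v + (x - v)) - h (u + v)) + (h (u + v) - h u)| := by
        ring_nf
    _ ≤ |h (u + v + (x - v)) - h (u + v)| + |h (u + v) - h u| := abs_add_le _ _
    _ ≤ ε / 2 + ε / 2 := add_le_add (hxvE _ (by linarith [hv.1])) (hvE u hu)
    _ = ε := add_halves ε

lemma sub_le_of_forall_Icc_abs_sub_le {n γ : ℝ}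
    (hloc : ∀ u ≥ n, ∀ x ∈ Icc (1 : ℝ) 2, |h (u + x) - h u| ≤ γ) {u U : ℝ}
    (hu : n ≤ u) (huU : u ≤ U) : h U - h u ≤ γ * (U - u) + 2 * γ := by
  have hstep : ∀ w ≥ n, ∀ x ∈ Icc (1 : ℝ) 2, -γ ≤ h (w + x) - h w ∧ h (w + x) - h w ≤ γ :=
    fun w hw x hx => abs_le.mp (hloc w hw x hx)
  have hγ : 0 ≤ γ := (abs_nonneg _).trans (hloc n le_rfl 1 ⟨le_rfl, one_le_two⟩)
  have hnat : ∀ k : ℕ, ∀ w ≥ n, h (w + k) - h w ≤ γ * k := by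
    intro k
    induction k with
    | zero => simp
    | succ k ih =>
      intro w hw
      have := (hstep (w + k) (by linarith [k.cast_nonneg (α := ℝ)]) 1 ⟨le_rfl, one_le_two⟩).2
      rw [Nat.cast_succ, ← add_assoc]
      linarith [ih w hw]
  -- a step `r ∈ [0, 1]` is the difference of the steps `r + 1` and `1`, both in `[1, 2]`
  have hfrac : ∀ w ≥ n, ∀ r ∈ Icc (0 : ℝ) 1, h (w + r) - h w ≤ 2 * γ := by
    intro w hw r hr
    have h1 := (hstep w hw (r + 1) ⟨by linarith [hr.1], by linarith [hr.2]⟩).2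
    have h2 := (hstep (w + r) (by linarith [hr.1]) 1 ⟨le_rfl, one_le_two⟩).1
    rw [← add_assoc] at h1
    linarith
  set k := ⌊U - u⌋₊
  have hk : (k : ℝ) ≤ U - u := Nat.floor_le (sub_nonneg.mpr huU)
  have hk' : U - u < k + 1 := Nat.lt_floor_add_one _
  have h2 := hfrac (u + k) (by linarith [k.cast_nonneg (α := ℝ)]) (U - u - k)
    ⟨by linarith, by linarith⟩
  rw [show u + k + (U - u - k) = U by ring] at h2
  linarith [hnat k u hu, mul_le_mul_of_nonneg_left hk hγ]

lemma exists_forall_ge_sub_le_mul_sub_add (hh : Continuous h)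
    (hlim : ∀ v, Tendsto (fun u => h (u + v) - h u) atTop (𝓝 0)) {γ : ℝ} (hγ : 0 < γ)
    (p : ℝ) : ∃ D, ∀ u ≥ p, ∀ U ≥ u, h U - h u ≤ γ * (U - u) + D := by
  obtain ⟨n₀, hn₀⟩ := exists_forall_Icc_abs_sub_le hh hlim hγ
  set n := max n₀ p
  have hloc : ∀ u ≥ n, ∀ x ∈ Icc (1 : ℝ) 2, |h (u + x) - h u| ≤ γ :=
    fun u hu => hn₀ u (le_of_max_le_left hu)
  obtain ⟨B, hB⟩ :=
    isCompact_Icc.exists_bound_of_continuousOn (s := Icc p n) hh.continuousOn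
  simp only [Real.norm_eq_abs, abs_le] at hB
  have hB0 : 0 ≤ B := by linarith [hB p ⟨le_rfl, le_max_right _ _⟩]
  refine ⟨2 * γ + 2 * B, fun u hu U hU => ?_⟩
  rcases le_or_gt n u with hnu | hun
  · linarith [sub_le_of_forall_Icc_abs_sub_le hloc hnu hU]
  rcases le_or_gt n U with hnU | hUn
  · have := sub_le_of_forall_Icc_abs_sub_le hloc le_rfl hnU
    have := hB n ⟨le_max_right _ _, le_rfl⟩
    have := hB u ⟨hu, hun.le⟩
    nlinarith
  · have := hB U ⟨hu.trans hU, hUn.le⟩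
    have := hB u ⟨hu, hun.le⟩
    nlinarith

end AdditiveForm

def IsSlowlyVarying_s7 (l : ℝ → ℝ) : Prop :=
  ∀ lam > (0 : ℝ), Tendsto (fun x => l (lam * x) / l x) atTop (𝓝 1)

lemma IsSlowlyVarying_s7.exists_le_mul_rpow_div {l : ℝ → ℝ} (hl : IsSlowlyVarying_s7 l)
    (hl_cont : ContinuousOn l (Ioi 0)) (hl_pos : ∀ x > (0 : ℝ), 0 < l x) {γ : ℝ} (hγ : 0 < γ)
    {m : ℝ} (hm : 0 < m) : ∃ C > 0, ∀ t ≥ m, ∀ T ≥ t, l T ≤ C * (T / t) ^ γ * l t := by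
  set h : ℝ → ℝ := fun u => Real.log (l (Real.exp u))
  have hh : Continuous h :=
    (hl_cont.comp_continuous Real.continuous_exp fun u => Real.exp_pos u).log
      fun u => (hl_pos _ (Real.exp_pos u)).ne'
  have hlim : ∀ v, Tendsto (fun u => h (u + v) - h u) atTop (𝓝 0) := by
    intro v
    have := ((Real.continuousAt_log one_ne_zero).tendsto.comp
      ((hl (Real.exp v) (Real.exp_pos v)).comp Real.tendsto_exp_atTop))
    rw [Real.log_one] at this
    refine this.congr fun u => ?_
    simp only [Function.comp_apply, h, Real.exp_add, mul_comm (Real.exp u)]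
    rw [Real.log_div (hl_pos _ (by positivity)).ne' (hl_pos _ (Real.exp_pos u)).ne']
  obtain ⟨D, hD⟩ := exists_forall_ge_sub_le_mul_sub_add hh hlim hγ (Real.log m)
  refine ⟨Real.exp D, Real.exp_pos D, fun t ht T hT => ?_⟩
  have ht0 : 0 < t := hm.trans_le ht
  have hT0 : 0 < T := ht0.trans_le hT
  have hlog := hD (Real.log t) (Real.log_le_log hm ht) (Real.log T) (Real.log_le_log ht0 hT)
  simp only [h, Real.exp_log ht0, Real.exp_log hT0] at hlog
  have hlt := hl_pos t ht0
  rw [← Real.log_le_log_iff (hl_pos T hT0) (by positivity),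
    Real.log_mul (by positivity) hlt.ne', Real.log_mul (by positivity) (by positivity),
    Real.log_exp, Real.log_rpow (by positivity), Real.log_div hT0.ne' ht0.ne']
  linarith

lemma exists_pos_forall_Ioc_le_of_tendsto {f : ℝ → ℝ} {a b L : ℝ}
    (hf : ContinuousOn f (Ioc a b)) (hlim : Tendsto f (𝓝[>] a) (𝓝 L)) :
    ∃ C > 0, ∀ y ∈ Ioc a b, f y ≤ C := by
  obtain ⟨δ, hδ, hnear⟩ :=
    mem_nhdsGT_iff_exists_Ioo_subset.mp (hlim (Iio_mem_nhds (lt_add_one L)))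
  obtain ⟨B, hB⟩ := isCompact_Icc.exists_bound_of_continuousOn
    (hf.mono fun y (hy : y ∈ Icc δ b) => ⟨(mem_Ioi.mp hδ).trans_le hy.1, hy.2⟩)
  refine ⟨|L| + 1 + |B|, by positivity, fun y hy => ?_⟩
  rcases lt_or_ge y δ with hyδ | hδy
  · linarith [show f y < L + 1 from hnear ⟨hy.1, hyδ⟩, le_abs_self L, abs_nonneg B]
  · linarith [(le_abs_self (f y)).trans (hB y ⟨hδy, hy.2⟩), abs_nonneg L, le_abs_self B]

lemma exists_pos_mul_le_of_tendsto_div {f g : ℝ → ℝ} {a b L : ℝ}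
    (hf : ContinuousOn f (Ioc a b)) (hf_pos : ∀ y ∈ Ioc a b, 0 < f y)
    (hg : ContinuousOn g (Ioc a b)) (hlim : Tendsto (fun y => g y / f y) (𝓝[>] a) (𝓝 L)) :
    ∃ c > 0, ∀ y ∈ Ioc a b, c * g y ≤ f y := by
  obtain ⟨C, hC, hle⟩ := exists_pos_forall_Ioc_le_of_tendsto
    (hg.div hf fun y hy => (hf_pos y hy).ne') hlim
  refine ⟨1 / C, one_div_pos.mpr hC, fun y hy => ?_⟩
  rw [one_div_mul_eq_div, div_le_iff₀ hC, mul_comm]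
  exact (div_le_iff₀ (hf_pos y hy)).mp (hle y hy)

lemma mul_rpow_le_of_mul_le_one {β γ C M c₁ s x : ℝ} {a Lp l : ℝ → ℝ}
    (hform : ∀ x > (0 : ℝ), a x = x ^ β * Lp (min x 1)) (hl_pos : ∀ x > (0 : ℝ), 0 < l x)
    (hC : 0 < C) (hpotter : ∀ t ≥ 1 / M, ∀ T ≥ t, l T ≤ C * (T / t) ^ γ * l t)
    (hc₁ : 0 ≤ c₁) (hLp : ∀ y ∈ Ioc (0 : ℝ) 1, c₁ * l (1 / y) ≤ Lp y) (hM : 1 ≤ M)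
    (hs : 0 < s) (hx : 1 ≤ x) (hsx : s * x ≤ 1) :
    c₁ / C * x ^ (β - γ) * (s ^ β * l (1 / s)) ≤ a (s * x) := by
  have hx0 : 0 < x := one_pos.trans_le hx
  have hpot := hpotter (1 / (s * x))
    (one_div_le_one_div_of_le (by positivity) (hsx.trans hM)) (1 / s)
    (one_div_le_one_div_of_le hs (le_mul_of_one_le_right hs.le hx))
  rw [show 1 / s / (1 / (s * x)) = x by field_simp] at hpot
  have := hl_pos (1 / (s * x)) (by positivity)
  rw [hform _ (by positivity), min_eq_left hsx, Real.mul_rpow hs.le hx0.le]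
  calc c₁ / C * x ^ (β - γ) * (s ^ β * l (1 / s))
      ≤ c₁ / C * x ^ (β - γ) * (s ^ β * (C * x ^ γ * l (1 / (s * x)))) := by gcongr
    _ = s ^ β * x ^ β * (c₁ * l (1 / (s * x))) := by rw [Real.rpow_sub hx0]; field_simp
    _ ≤ s ^ β * x ^ β * Lp (s * x) := by gcongr; exact hLp _ ⟨by positivity, hsx⟩

lemma mul_rpow_le_of_one_lt_mul {β γ C M s x : ℝ} {a Lp l : ℝ → ℝ}
    (hform : ∀ x > (0 : ℝ), a x = x ^ β * Lp (min x 1)) (hl_pos : ∀ x > (0 : ℝ), 0 < l x)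
    (hC : 0 < C) (hpotter : ∀ t ≥ 1 / M, ∀ T ≥ t, l T ≤ C * (T / t) ^ γ * l t)
    (hγ : 0 ≤ γ) (hLp1 : 0 ≤ Lp 1) (hs : s ∈ Ioc 0 M) (hx : 1 ≤ x) (hsx : 1 < s * x) :
    Lp 1 / (C * M ^ γ * l (1 / M)) * x ^ (β - γ) * (s ^ β * l (1 / s)) ≤ a (s * x) := by
  have hs0 := hs.1
  have hM0 : 0 < M := hs0.trans_le hs.2
  have hx0 : 0 < x := one_pos.trans_le hx
  have hpot := hpotter (1 / M) le_rfl (1 / s) (one_div_le_one_div_of_le hs0 hs.2)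
  rw [show 1 / s / (1 / M) = M / s by field_simp] at hpot
  have hMx : (M / s) ^ γ ≤ M ^ γ * x ^ γ := by
    rw [← Real.mul_rpow hM0.le hx0.le]
    gcongr
    rw [div_le_iff₀ hs0]
    nlinarith
  have := hl_pos (1 / M) (by positivity)
  have := hl_pos (1 / s) (by positivity)
  rw [hform _ (by positivity), min_eq_right hsx.le, Real.mul_rpow hs0.le hx0.le]
  calc Lp 1 / (C * M ^ γ * l (1 / M)) * x ^ (β - γ) * (s ^ β * l (1 / s))
      ≤ Lp 1 / (C * M ^ γ * l (1 / M)) * x ^ (β - γ) *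
          (s ^ β * (C * (M ^ γ * x ^ γ) * l (1 / M))) := by
        gcongr
        exact hpot.trans (by gcongr)
    _ = s ^ β * x ^ β * Lp 1 := by rw [Real.rpow_sub hx0]; field_simp

lemma exists_pos_mul_rpow_le {β Ap γ M : ℝ} {a Lp l : ℝ → ℝ} (hAp : 0 < Ap)
    (hLp_cont : ContinuousOn Lp (Ioc 0 1)) (hLp_pos : ∀ x ∈ Ioc (0 : ℝ) 1, 0 < Lp x)
    (hform : ∀ x > (0 : ℝ), a x = x ^ β * Lp (min x 1))
    (hl_cont : ContinuousOn l (Ioi 0)) (hl_pos : ∀ x > (0 : ℝ), 0 < l x)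
    (hl_sv : IsSlowlyVarying_s7 l)
    (hLp_asymp : Tendsto (fun x => Lp x / (Ap * l (1 / x))) (𝓝[>] 0) (𝓝 1))
    (hγ : 0 < γ) (hM : 1 ≤ M) :
    ∃ c > 0, ∀ s ∈ Ioc 0 M, ∀ x ≥ (1 : ℝ),
      c * x ^ (β - γ) * (s ^ β * l (1 / s)) ≤ a (s * x) := by
  have hM0 : 0 < M := one_pos.trans_le hM
  obtain ⟨c₁, hc₁, hLp⟩ := exists_pos_mul_le_of_tendsto_div
    (g := fun y => Ap * l (1 / y)) hLp_cont hLp_pos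
    (continuousOn_const.mul (hl_cont.comp (continuousOn_const.div continuousOn_id
      fun y hy => hy.1.ne') fun y hy => one_div_pos.mpr hy.1))
    (by simpa only [inv_div, inv_one] using hLp_asymp.inv₀ one_ne_zero)
  obtain ⟨C, hC, hpotter⟩ :=
    hl_sv.exists_le_mul_rpow_div hl_cont hl_pos hγ (one_div_pos.mpr hM0)
  have hlM := hl_pos (1 / M) (by positivity)
  have hLp1 := hLp_pos 1 ⟨one_pos, le_rfl⟩
  refine ⟨min (c₁ * Ap / C) (Lp 1 / (C * M ^ γ * l (1 / M))), by positivity,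
    fun s hs x hx => ?_⟩
  have hs0 := hs.1
  have hx0 : 0 < x := one_pos.trans_le hx
  have := hl_pos (1 / s) (by positivity)
  rcases le_or_gt (s * x) 1 with hsx | hsx
  · refine le_trans ?_ (mul_rpow_le_of_mul_le_one hform hl_pos hC hpotter (by positivity)
      (fun y hy => (mul_assoc c₁ Ap _).trans_le (hLp y hy)) hM hs0 hx hsx)
    gcongr
    exact min_le_left _ _
  · refine le_trans ?_ (mul_rpow_le_of_one_lt_mul hform hl_pos hC hpotter hγ.le hLp1.le hs hx hsx)
    gcongr
    exact min_le_right _ _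

theorem stmt_7_general (β Ap : ℝ) (hAp : 0 < Ap)
    (a Lp l : ℝ → ℝ)
    (hLp_cont : ContinuousOn Lp (Set.Ioc 0 1)) (hLp_pos : ∀ x ∈ Set.Ioc (0:ℝ) 1, 0 < Lp x)
    (hform : ∀ x > (0:ℝ), a x = x ^ β * Lp (min x 1))
    (hl_cont : ContinuousOn l (Set.Ioi 0)) (hl_pos : ∀ x > (0:ℝ), 0 < l x)
    (hl_sv : ∀ lam > (0:ℝ), Tendsto (fun x => l (lam * x) / l x) atTop (nhds 1))
    (hLp_asymp : Tendsto (fun x => Lp x / (Ap * l (1 / x))) (nhdsWithin 0 (Set.Ioi 0)) (nhds 1))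
    (e' e'' : ℝ → ℝ)
    (he'_cont : ContinuousOn e' (Set.Ioc 0 1)) (he''_cont : ContinuousOn e'' (Set.Ioc 0 1))
    (hpos : ∀ ε ∈ Set.Ioc (0:ℝ) 1, 0 < e' ε ∧ 0 < e'' ε)
    (he'' : Tendsto e'' (nhdsWithin 0 (Set.Ioi 0)) (nhds 0))
    (hratio : Tendsto (fun ε => (e'' ε / e' ε) / ((e'' ε) ^ β * l (1 / e'' ε)))
      (nhdsWithin 0 (Set.Ioi 0)) (nhds 1)) :
    ∀ γ ∈ Set.Ioo (0:ℝ) β, ∃ K > (0:ℝ), ∀ ε ∈ Set.Ioc (0:ℝ) 1, ∀ x ≥ (1:ℝ),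
      K * x ^ (β - γ) ≤ (e' ε / e'' ε) * a (e'' ε * x) := by
  intro γ hγ
  have he''_ne : ∀ ε ∈ Ioc (0 : ℝ) 1, e'' ε ≠ 0 := fun ε hε => (hpos ε hε).2.ne'
  obtain ⟨c₀, hc₀, hscale⟩ := exists_pos_mul_le_of_tendsto_div
    (f := fun ε => e'' ε ^ β * l (1 / e'' ε)) (g := fun ε => e'' ε / e' ε)
    ((he''_cont.rpow_const fun ε hε => Or.inl (he''_ne ε hε)).mul
      (hl_cont.comp (continuousOn_const.div he''_cont he''_ne)
        fun ε hε => one_div_pos.mpr (hpos ε hε).2))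
    (fun ε hε => mul_pos (Real.rpow_pos_of_pos (hpos ε hε).2 β)
      (hl_pos _ (one_div_pos.mpr (hpos ε hε).2)))
    (he''_cont.div he'_cont fun ε hε => (hpos ε hε).1.ne') hratio
  obtain ⟨M, -, hM⟩ := exists_pos_forall_Ioc_le_of_tendsto he''_cont he''
  obtain ⟨c, hc, hcore⟩ := exists_pos_mul_rpow_le hAp hLp_cont hLp_pos hform hl_cont hl_pos hl_sv
    hLp_asymp hγ.1 (le_max_right M 1)
  refine ⟨c * c₀, by positivity, fun ε hε x hx => ?_⟩
  obtain ⟨he'ε, he''ε⟩ := hpos ε hε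
  calc c * c₀ * x ^ (β - γ) = e' ε / e'' ε * (c * x ^ (β - γ) * (c₀ * (e'' ε / e' ε))) := by
        field_simp
    _ ≤ e' ε / e'' ε * (c * x ^ (β - γ) * (e'' ε ^ β * l (1 / e'' ε))) := by
        gcongr _ * (_ * ?_)
        exact hscale ε hε
    _ ≤ e' ε / e'' ε * a (e'' ε * x) := by
        gcongr
        exact hcore _ ⟨he''ε, (hM ε hε).trans (le_max_left M 1)⟩ x hx

/-- Uniform power-law lower bound for the rescaled drift
`a_ε(x) = (ε'/ε'')·a(ε''·x)` on `[1,∞)`. -/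
theorem stmt_7 (β Ap : ℝ) (hβ : β ∈ Set.Ioo (0:ℝ) 1) (hAp : 0 < Ap)
    (a Lp l : ℝ → ℝ)
    (ha_cont : Continuous a) (ha0 : a 0 = 0)
    (hLp_cont : ContinuousOn Lp (Set.Ioc 0 1)) (hLp_pos : ∀ x ∈ Set.Ioc (0:ℝ) 1, 0 < Lp x)
    (hform : ∀ x > (0:ℝ), a x = x ^ β * Lp (min x 1))
    (hl_cont : ContinuousOn l (Set.Ioi 0)) (hl_pos : ∀ x > (0:ℝ), 0 < l x)
    (hl_sv : ∀ lam > (0:ℝ), Tendsto (fun x => l (lam * x) / l x) atTop (nhds 1))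
    (hLp_asymp : Tendsto (fun x => Lp x / (Ap * l (1 / x))) (nhdsWithin 0 (Set.Ioi 0)) (nhds 1))
    (e' e'' : ℝ → ℝ)
    (he'_cont : ContinuousOn e' (Set.Ioc 0 1)) (he''_cont : ContinuousOn e'' (Set.Ioc 0 1))
    (hpos : ∀ ε ∈ Set.Ioc (0:ℝ) 1, 0 < e' ε ∧ 0 < e'' ε)
    (he'' : Tendsto e'' (nhdsWithin 0 (Set.Ioi 0)) (nhds 0))
    (hratio : Tendsto (fun ε => (e'' ε / e' ε) / ((e'' ε) ^ β * l (1 / e'' ε)))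
      (nhdsWithin 0 (Set.Ioi 0)) (nhds 1)) :
    ∀ γ ∈ Set.Ioo (0:ℝ) β, ∃ K > (0:ℝ), ∀ ε ∈ Set.Ioc (0:ℝ) 1, ∀ x ≥ (1:ℝ),
      K * x ^ (β - γ) ≤ (e' ε / e'' ε) * a (e'' ε * x) :=
  stmt_7_general β Ap hAp a Lp l hLp_cont hLp_pos hform hl_cont hl_pos hl_sv hLp_asymp e' e''
    he'_cont he''_cont hpos he'' hratio
end

section
/- Let 0 < γ < β < 1, κ ∈ (0,1), and K_γ > 0. Then there exists a constant K > 0, depending only on β, γ, κ, K_γ, with the following property: for every y ≥ 1, every continuous function f : ℝ → ℝ satisfying f(x) ≥ K_γ·x^{β−γ} for all x ≥ 1, and every continuous function ζ : [0,∞) → ℝ satisfying ζ(t) = y + (1−κ)·∫₀^t f(ζ(s)) ds for all t ≥ 0, one has ζ(t) ≥ y + K·t^{1/(1−β+γ)} for all t ≥ 0. -/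
/-!
Extend `ζ` past `0` so that it becomes differentiable, with `ζ' = (1 - κ) f(ζ)` on `[0, ∞)`.
Since `ζ' ≥ (1 - κ) Kγ > 0` wherever `ζ = 1`, the solution never drops below `1`, and there
`(ζ ^ q)' = q ζ ^ (q - 1) ζ' ≥ q (1 - κ) Kγ` with `q = 1 - β + γ`. Hence
`ζ(t) ^ q ≥ y ^ q + q (1 - κ) Kγ t`, and superadditivity of `x ↦ x ^ (1 / q)` for `q ≤ 1` splits
the `1 / q`-th power of the right-hand side into `y + (q (1 - κ) Kγ) ^ (1 / q) t ^ (1 / q)`.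
-/

open Set

theorem exists_hasDerivAt_eqOn_of_eq_add_integral {f ζ : ℝ → ℝ} {y c : ℝ} (hf : Continuous f)
    (hζ : ContinuousOn ζ (Ici 0)) (heq : ∀ t ≥ (0:ℝ), ζ t = y + c * ∫ s in (0:ℝ)..t, f (ζ s)) :
    ∃ η : ℝ → ℝ, EqOn η ζ (Ici 0) ∧ ∀ t ≥ (0:ℝ), HasDerivAt η (c * f (η t)) t := by
  set g : ℝ → ℝ := fun s => f (ζ (max s 0))
  have hg : Continuous g := hf.comp <|
    hζ.comp_continuous (continuous_id.max continuous_const) fun _ => mem_Ici.2 (le_max_right _ _)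
  have hgζ : ∀ s ≥ (0:ℝ), g s = f (ζ s) := fun s hs => by simp only [g, max_eq_left hs]
  have hηζ : EqOn (fun t => y + c * ∫ s in (0:ℝ)..t, g s) ζ (Ici 0) := fun t (ht : 0 ≤ t) => by
    dsimp only
    rw [heq t ht, intervalIntegral.integral_congr fun s hs => hgζ s (uIcc_of_le ht ▸ hs).1]
  refine ⟨_, hηζ, fun t ht => ?_⟩
  have hder := ((hg.integral_hasStrictDerivAt 0 t).hasDerivAt.const_mul c).const_add y
  rwa [hgζ t ht, ← hηζ ht] at hder

theorem le_of_hasDerivAt_pos_of_eq {η d : ℝ → ℝ} {m : ℝ} (hη : ∀ t ≥ (0:ℝ), HasDerivAt η (d t) t)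
    (h0 : m ≤ η 0) (hd : ∀ t ≥ (0:ℝ), η t = m → 0 < d t) {t : ℝ} (ht : 0 ≤ t) : m ≤ η t :=
  image_le_of_deriv_right_lt_deriv_boundary' (f := fun _ => m) (a := 0) (b := t)
    continuousOn_const (fun _ _ => hasDerivWithinAt_const _ _ _) h0
    (fun s hs => (hη s hs.1).continuousAt.continuousWithinAt)
    (fun s hs => (hη s hs.1).hasDerivWithinAt) (fun s hs hs' => hd s hs.1 hs'.symm)
    ⟨ht, le_rfl⟩

theorem rpow_add_mul_le_rpow_of_hasDerivAt {η d : ℝ → ℝ} {A α : ℝ} (hα : α < 1)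
    (hη : ∀ t ≥ (0:ℝ), HasDerivAt η (d t) t) (hpos : ∀ t ≥ (0:ℝ), 0 < η t)
    (hd : ∀ t ≥ (0:ℝ), A * η t ^ α ≤ d t) {t : ℝ} (ht : 0 ≤ t) :
    η 0 ^ (1 - α) + (1 - α) * A * t ≤ η t ^ (1 - α) := by
  refine image_le_of_deriv_right_le_deriv_boundary
    (f := fun s => η 0 ^ (1 - α) + (1 - α) * A * s) (f' := fun _ => (1 - α) * A) (a := 0) (b := t)
    (B := fun s => η s ^ (1 - α))
    (B' := fun s => d s * (1 - α) * η s ^ (1 - α - 1)) (by fun_prop)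
    (fun s _ => ((hasDerivAt_id s).const_mul _).const_add _ |>.hasDerivWithinAt |>.congr_deriv
      (mul_one _)) (by simp) (fun s hs => ?_) (fun s hs => ?_) (fun s hs => ?_) ⟨ht, le_rfl⟩
  · exact ((hη s hs.1).rpow_const (Or.inl (hpos s hs.1).ne')).continuousAt.continuousWithinAt
  · exact ((hη s hs.1).rpow_const (Or.inl (hpos s hs.1).ne')).hasDerivWithinAt
  · have hcancel : η s ^ α * η s ^ (1 - α - 1) = 1 := by
      rw [← Real.rpow_add (hpos s hs.1), show α + (1 - α - 1) = 0 by ring, Real.rpow_zero]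
    calc (1 - α) * A = A * η s ^ α * (1 - α) * η s ^ (1 - α - 1) := by
          linear_combination (-(1 - α) * A) * hcancel
      _ ≤ d s * (1 - α) * η s ^ (1 - α - 1) := by
          gcongr ?_ * _ * _
          exacts [(Real.rpow_pos_of_pos (hpos s hs.1) _).le, hd s hs.1]

theorem add_mul_rpow_one_div_le_of_rpow_add_mul_le {y c t z q : ℝ} (hq0 : 0 < q) (hq1 : q ≤ 1)
    (hy : 0 ≤ y) (hc : 0 ≤ c) (ht : 0 ≤ t) (hz : 0 ≤ z) (h : y ^ q + c * t ≤ z ^ q) :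
    y + c ^ (1 / q) * t ^ (1 / q) ≤ z :=
  calc y + c ^ (1 / q) * t ^ (1 / q) = (y ^ q) ^ (1 / q) + (c * t) ^ (1 / q) := by
        rw [Real.mul_rpow hc ht, one_div, Real.rpow_rpow_inv hy hq0.ne']
    _ ≤ (y ^ q + c * t) ^ (1 / q) :=
        Real.add_rpow_le_rpow_add (by positivity) (by positivity) (one_le_one_div hq0 hq1)
    _ ≤ (z ^ q) ^ (1 / q) := by gcongr
    _ = z := by rw [one_div, Real.rpow_rpow_inv hz hq0.ne']

/-- Lower bound for solutions of the integral equation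
`ζ(t) = y + (1−κ)∫₀^t f(ζ(s)) ds` when `f(x) ≥ K_γ x^{β−γ}` on `[1,∞)`. -/
theorem stmt_9 (γ β κ Kγ : ℝ) (hγ : 0 < γ) (hγβ : γ < β) (hβ : β < 1)
    (hκ : κ ∈ Set.Ioo (0:ℝ) 1) (hKγ : 0 < Kγ) :
    ∃ K > (0:ℝ), ∀ y ≥ (1:ℝ), ∀ f : ℝ → ℝ, Continuous f →
      (∀ x ≥ (1:ℝ), Kγ * x ^ (β - γ) ≤ f x) →
      ∀ ζ : ℝ → ℝ, ContinuousOn ζ (Set.Ici 0) →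
        (∀ t ≥ (0:ℝ), ζ t = y + (1 - κ) * ∫ s in (0:ℝ)..t, f (ζ s)) →
        ∀ t ≥ (0:ℝ), y + K * t ^ (1 / (1 - β + γ)) ≤ ζ t := by
  have hκ' : 0 < 1 - κ := sub_pos.2 hκ.2
  have hq : 1 - (β - γ) = 1 - β + γ := by ring
  refine ⟨((1 - β + γ) * ((1 - κ) * Kγ)) ^ (1 / (1 - β + γ)), by
    have : 0 < 1 - β + γ := by linarith
    positivity, ?_⟩
  intro y hy f hf hfKγ ζ hζ heq t ht
  obtain ⟨η, hηζ, hη⟩ := exists_hasDerivAt_eqOn_of_eq_add_integral hf hζ heq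
  have hη0 : η 0 = y := by rw [hηζ self_mem_Ici, heq 0 le_rfl, intervalIntegral.integral_same,
    mul_zero, add_zero]
  have hd : ∀ s ≥ (0:ℝ), 1 ≤ η s → (1 - κ) * Kγ * η s ^ (β - γ) ≤ (1 - κ) * f (η s) :=
    fun s _ hs => by rw [mul_assoc]; exact mul_le_mul_of_nonneg_left (hfKγ _ hs) hκ'.le
  have hge : ∀ s ≥ (0:ℝ), 1 ≤ η s := fun s hs =>
    le_of_hasDerivAt_pos_of_eq hη (hη0 ▸ hy)
      (fun u hu hu1 => (mul_pos hκ' hKγ).trans_le (by simpa [hu1] using hd u hu hu1.ge)) hs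
  have hcomp := rpow_add_mul_le_rpow_of_hasDerivAt (by linarith : β - γ < 1) hη
    (fun s hs => one_pos.trans_le (hge s hs)) (fun s hs => hd s hs (hge s hs)) ht
  rw [hq, hη0] at hcomp
  rw [← hηζ (mem_Ici.2 ht)]
  exact add_mul_rpow_one_div_le_of_rpow_add_mul_le (by linarith) (by linarith) (by linarith)
    (by positivity) ht (by linarith [hge t ht]) hcomp
end

section
/- Let X : [0,∞) → ℝ be a continuous function satisfying X(t) = ∫₀^t a(X(s)) ds for all t ≥ 0. Then exactly one of the following holds: (i) X(t) = 0 for all t ≥ 0; (ii) there exists t₀ ∈ [0,∞) such that X(t) = 0 for t ∈ [0,t₀] and X(t) = A₊⁻¹(t − t₀) for t ≥ t₀; (iii) there exists t₀ ∈ [0,∞) such that X(t) = 0 for t ∈ [0,t₀] and X(t) = −B⁻¹(t − t₀) for t ≥ t₀. -/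
open Filter Set MeasureTheory

open Topology


lemma my_key_mono {X : ℝ → ℝ} {s t c : ℝ} (hst : s ≤ t)
    (hcont : ∀ r ∈ Icc s t, ContinuousAt X r)
    (hXs : c ≤ X s)
    (hd : ∀ r ∈ Ico s t, c ≤ X r → ∃ d, 0 < d ∧ HasDerivAt X d r) :
    c ≤ X t := by
  by_contra hlt
  push_neg at hlt
  set K : Set ℝ := {r | r ∈ Icc s t ∧ c ≤ X r} with hK
  have hKne : s ∈ K := ⟨⟨le_refl s, hst⟩, hXs⟩
  have hKbdd : BddAbove K := ⟨t, fun r hr => hr.1.2⟩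
  set u := sSup K with hu
  have hsu : s ≤ u := le_csSup hKbdd hKne
  have hut : u ≤ t := csSup_le ⟨s, hKne⟩ (fun r hr => hr.1.2)
  have hXu : c ≤ X u := by
    by_contra h
    push_neg at h
    have hc := hcont u ⟨hsu, hut⟩
    have hpre : X ⁻¹' (Iio c) ∈ 𝓝 u := hc.preimage_mem_nhds (Iio_mem_nhds h)
    obtain ⟨ε, hε, hball⟩ := Metric.mem_nhds_iff.mp hpre
    obtain ⟨k, hkK, hk⟩ := exists_lt_of_lt_csSup ⟨s, hKne⟩ (by linarith : u - ε < u)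
    have hku : k ≤ u := le_csSup hKbdd hkK
    have : k ∈ Metric.ball u ε := by
      simp only [Metric.mem_ball, Real.dist_eq, abs_lt]
      constructor <;> linarith
    exact absurd hkK.2 (not_le.2 (hball this))
  have hu_lt : u < t := lt_of_le_of_ne hut (fun h => absurd (h ▸ hXu) (not_le.2 hlt))
  obtain ⟨d, hd0, hder⟩ := hd u ⟨hsu, hu_lt⟩ hXu
  have hslope := hasDerivAt_iff_tendsto_slope.mp hder
  have h1 : ∀ᶠ r in 𝓝[≠] u, 0 < slope X u r := hslope.eventually (eventually_gt_nhds hd0)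
  have h1' : ∀ᶠ r in 𝓝[>] u, 0 < slope X u r :=
    h1.filter_mono (nhdsWithin_mono u (fun r hr => ne_of_gt hr))
  have h2 : ∀ᶠ r in 𝓝[>] u, r < t :=
    eventually_nhdsWithin_of_eventually_nhds (eventually_lt_nhds hu_lt)
  have h3 : ∀ᶠ r in 𝓝[>] u, u < r := eventually_mem_nhdsWithin
  obtain ⟨r, hr1, hr2, hr3⟩ := (h1'.and (h2.and h3)).exists
  have hXur : X u < X r := by
    have hs : slope X u r = (X r - X u) / (r - u) := slope_def_field X u r
    rw [hs] at hr1
    have := mul_pos hr1 (sub_pos.2 hr3)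
    rw [div_mul_cancel₀ _ (ne_of_gt (sub_pos.2 hr3))] at this
    linarith
  have hrK : r ∈ K := ⟨⟨le_trans hsu hr3.le, hr2.le⟩, le_trans hXu hXur.le⟩
  exact absurd (le_csSup hKbdd hrK) (not_le.2 hr3)

lemma my_hasDerivAt_X {a X : ℝ → ℝ} (ha_cont : Continuous a)
    (hXc : ContinuousOn X (Ici 0))
    (hXeq : ∀ t ≥ (0:ℝ), X t = ∫ s in (0:ℝ)..t, a (X s)) {r : ℝ} (hr : 0 < r) :
    HasDerivAt X (a (X r)) r := by
  have haX : ContinuousOn (fun s => a (X s)) (Ici 0) := ha_cont.comp_continuousOn hXc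
  have hIci : Ici (0:ℝ) ∈ 𝓝 r := Ici_mem_nhds hr
  have hint : IntervalIntegrable (fun s => a (X s)) volume 0 r := by
    apply ContinuousOn.intervalIntegrable
    apply haX.mono
    rw [uIcc_of_le hr.le]
    exact Icc_subset_Ici_self
  have hmeas : StronglyMeasurableAtFilter (fun s => a (X s)) (𝓝 r) volume := by
    exact ContinuousOn.stronglyMeasurableAtFilter isOpen_Ioi (haX.mono Ioi_subset_Ici_self) r hr
  have hcont : ContinuousAt (fun s => a (X s)) r :=
    (haX r (le_of_lt hr)).continuousAt hIci
  have hI : HasDerivAt (fun t => ∫ s in (0:ℝ)..t, a (X s)) (a (X r)) r :=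
    intervalIntegral.integral_hasDerivAt_right hint hmeas hcont
  apply hI.congr_of_eventuallyEq
  filter_upwards [hIci] with t ht
  exact hXeq t ht

/-- Separation of variables. -/
lemma my_sep_var {Y f Finv : ℝ → ℝ} {t₀ : ℝ}
    (hY0 : Y t₀ = 0)
    (hYpos : ∀ t > t₀, 0 < Y t)
    (hYc : ContinuousOn Y (Ici t₀))
    (hYd : ∀ r > t₀, HasDerivAt Y (f (Y r)) r)
    (hf_cont : ContinuousOn f (Ioi 0)) (hf_pos : ∀ v > (0:ℝ), 0 < f v)
    (hFinv_left : ∀ u ≥ (0:ℝ), Finv (∫ v in Ioc (0:ℝ) u, 1 / f v) = u) :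
    ∀ t ≥ t₀, Y t = Finv (t - t₀) := by
  set F : ℝ → ℝ := fun u => ∫ v in Ioc (0:ℝ) u, 1 / f v with hF
  have hF0 : F 0 = 0 := by
    simp [hF, Set.Ioc_self]
  have hFinv0 : Finv 0 = 0 := by
    have h := hFinv_left 0 le_rfl
    rw [show (∫ v in Ioc (0:ℝ) 0, 1 / f v) = F 0 from rfl, hF0] at h
    exact h
  -- integrability of 1/f on Ioc 0 u for u > 0
  have hInt : ∀ u > (0:ℝ), IntegrableOn (fun v => 1 / f v) (Ioc 0 u) := by
    intro u hu
    by_contra hni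
    have h0 : F u = 0 := integral_undef hni
    have h := hFinv_left u hu.le
    rw [show (∫ v in Ioc (0:ℝ) u, 1 / f v) = F u from rfl, h0, hFinv0] at h
    exact absurd h.symm (ne_of_gt hu)
  -- 1/f is continuous on Ioi 0
  have hinv_cont : ContinuousOn (fun v => 1 / f v) (Ioi 0) :=
    continuousOn_const.div hf_cont (fun v hv => ne_of_gt (hf_pos v hv))
  -- F has derivative 1 / f u at every u > 0
  have hFd : ∀ u > (0:ℝ), HasDerivAt F (1 / f u) u := by
    intro u hu
    have hint : IntervalIntegrable (fun v => 1 / f v) volume 0 u :=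
      (intervalIntegrable_iff_integrableOn_Ioc_of_le hu.le).mpr (hInt u hu)
    have hmeas : StronglyMeasurableAtFilter (fun v => 1 / f v) (𝓝 u) volume :=
      ContinuousOn.stronglyMeasurableAtFilter isOpen_Ioi hinv_cont u hu
    have hcont : ContinuousAt (fun v => 1 / f v) u :=
      (hinv_cont u hu).continuousAt (Ioi_mem_nhds hu)
    have hI : HasDerivAt (fun w => ∫ v in (0:ℝ)..w, 1 / f v) (1 / f u) u :=
      intervalIntegral.integral_hasDerivAt_right hint hmeas hcont
    apply hI.congr_of_eventuallyEq
    filter_upwards [Ioi_mem_nhds hu] with w hw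
    rw [hF]
    exact (intervalIntegral.integral_of_le (le_of_lt hw)).symm
  -- F is continuous on Icc 0 M for any M > 0
  have hFc : ∀ M > (0:ℝ), ContinuousOn F (Icc 0 M) := by
    intro M hM
    have : IntegrableOn (fun v => 1 / f v) (Icc 0 M) := by
      rw [integrableOn_Icc_iff_integrableOn_Ioc]
      exact hInt M hM
    exact intervalIntegral.continuousOn_primitive this
  -- main claim
  intro t ht
  rcases eq_or_lt_of_le ht with rfl | htlt
  · rw [sub_self, hFinv0, hY0]
  -- bound on Y over [t₀, t]
  obtain ⟨M₀, hM₀⟩ := (isCompact_Icc.image_of_continuousOn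
    (hYc.mono Icc_subset_Ici_self)).bddAbove
  set M : ℝ := max M₀ 1 with hM
  have hMpos : (0:ℝ) < M := lt_of_lt_of_le one_pos (le_max_right _ _)
  have hmaps : MapsTo Y (Icc t₀ t) (Icc 0 M) := by
    intro r hr
    constructor
    · rcases eq_or_lt_of_le hr.1 with rfl | h
      · exact le_of_eq hY0.symm
      · exact (hYpos r h).le
    · exact le_trans (hM₀ (mem_image_of_mem Y hr)) (le_max_left _ _)
  -- F ∘ Y continuous on Icc t₀ t
  have hFYc : ContinuousOn (fun r => F (Y r)) (Icc t₀ t) :=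
    (hFc M hMpos).comp (hYc.mono Icc_subset_Ici_self) hmaps
  -- key equation for t₀' in (t₀, t)
  have hkey : ∀ t₀' ∈ Ioo t₀ t, F (Y t) - t = F (Y t₀') - t₀' := by
    intro t₀' ht₀'
    set g : ℝ → ℝ := fun r => F (Y r) - r with hg
    have hgc : ContinuousOn g (Icc t₀' t) :=
      (hFYc.mono (Icc_subset_Icc ht₀'.1.le le_rfl)).sub continuousOn_id
    have hgd : ∀ r ∈ Ico t₀' t, HasDerivWithinAt g 0 (Ici r) r := by
      intro r hr
      have hrt₀ : t₀ < r := lt_of_lt_of_le ht₀'.1 hr.1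
      have hYr : 0 < Y r := hYpos r hrt₀
      have hchain : HasDerivAt (fun r => F (Y r)) (1 / f (Y r) * f (Y r)) r :=
        (hFd (Y r) hYr).comp r (hYd r hrt₀)
      have h1 : (1:ℝ) / f (Y r) * f (Y r) = 1 :=
        one_div_mul_cancel (ne_of_gt (hf_pos _ hYr))
      rw [h1] at hchain
      have : HasDerivAt g (1 - 1) r := hchain.sub (hasDerivAt_id r)
      simpa using this.hasDerivWithinAt
    have := constant_of_has_deriv_right_zero hgc hgd t ⟨ht₀'.2.le, le_rfl⟩
    simpa [hg] using this
  -- limit as t₀' → t₀⁺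
  have hne : (𝓝[Ioo t₀ t] t₀).NeBot := by
    apply mem_closure_iff_nhdsWithin_neBot.mp
    rw [closure_Ioo (ne_of_lt htlt)]
    exact ⟨le_rfl, htlt.le⟩
  have hlim1 : Tendsto (fun t₀' => F (Y t₀') - t₀') (𝓝[Ioo t₀ t] t₀)
      (𝓝 (F (Y t₀) - t₀)) := by
    apply Filter.Tendsto.sub _ (tendsto_id.mono_left nhdsWithin_le_nhds)
    have h := (hFYc t₀ ⟨le_rfl, htlt.le⟩)
    exact (h.mono (Ioo_subset_Icc_self)).tendsto
  have hlim2 : Tendsto (fun t₀' => F (Y t₀') - t₀') (𝓝[Ioo t₀ t] t₀)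
      (𝓝 (F (Y t) - t)) := by
    apply Tendsto.congr' _ tendsto_const_nhds
    filter_upwards [self_mem_nhdsWithin] with t₀' ht₀'
    exact (hkey t₀' ht₀')
  have heq : F (Y t) - t = F (Y t₀) - t₀ := tendsto_nhds_unique hlim2 hlim1
  rw [hY0, hF0] at heq
  have hFYt : F (Y t) = t - t₀ := by linarith
  have := hFinv_left (Y t) (hYpos t htlt).le
  rw [show (∫ v in Ioc (0:ℝ) (Y t), 1 / f v) = F (Y t) from rfl, hFYt] at this
  exact this.symm

/-- Classification of the solutions of `X(t) = ∫₀^t a(X(s)) ds` starting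
at `0`: exactly one of (i) `X ≡ 0`, (ii) `X` vanishes up to some `t₀` and then follows
`A₊⁻¹(t − t₀)`, (iii) `X` vanishes up to some `t₀` and then follows `−B⁻¹(t − t₀)`. -/
theorem stmt_13 (a : ℝ → ℝ) (β Ap Am Cg : ℝ)
    (hβ : β ∈ Set.Ioo (0:ℝ) 1) (hAp : 0 < Ap) (hAm : 0 < Am) (hCg : 0 < Cg)
    (ha_cont : Continuous a) (ha0 : a 0 = 0)
    (hgrowth : ∀ x, |a x| ≤ Cg * (1 + |x|))
    (Lp Lm l : ℝ → ℝ)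
    (hLp_cont : ContinuousOn Lp (Set.Ioi 0)) (hLp_pos : ∀ x > (0:ℝ), 0 < Lp x)
    (hLm_cont : ContinuousOn Lm (Set.Ioi 0)) (hLm_pos : ∀ x > (0:ℝ), 0 < Lm x)
    (hform_p : ∀ x > (0:ℝ), a x = x ^ β * Lp x)
    (hform_m : ∀ x < (0:ℝ), a x = -(|x| ^ β * Lm |x|))
    (hl_cont : ContinuousOn l (Set.Ioi 0)) (hl_pos : ∀ x > (0:ℝ), 0 < l x)
    (hl_sv : ∀ lam > (0:ℝ), Tendsto (fun x => l (lam * x) / l x) atTop (nhds 1))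
    (hLp_asymp : Tendsto (fun x => Lp x / (Ap * l (1 / x))) (nhdsWithin 0 (Set.Ioi 0)) (nhds 1))
    (hLm_asymp : Tendsto (fun x => Lm x / (Am * l (1 / x))) (nhdsWithin 0 (Set.Ioi 0)) (nhds 1))
    (Ainv Binv : ℝ → ℝ)
    (hAinv_left : ∀ u ≥ (0:ℝ), Ainv (∫ y in Set.Ioc (0:ℝ) u, 1 / a y) = u)
    (hAinv_right : ∀ t ≥ (0:ℝ), 0 ≤ Ainv t ∧ (∫ y in Set.Ioc (0:ℝ) (Ainv t), 1 / a y) = t)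
    (hBinv_left : ∀ u ≥ (0:ℝ), Binv (∫ v in Set.Ioc (0:ℝ) u, 1 / (v ^ β * Lm v)) = u)
    (hBinv_right : ∀ t ≥ (0:ℝ),
      0 ≤ Binv t ∧ (∫ v in Set.Ioc (0:ℝ) (Binv t), 1 / (v ^ β * Lm v)) = t)
    (X : ℝ → ℝ) (hXc : ContinuousOn X (Set.Ici 0))
    (hXeq : ∀ t ≥ (0:ℝ), X t = ∫ s in (0:ℝ)..t, a (X s)) :
    ((∀ t ≥ (0:ℝ), X t = 0) ∧
      ¬(∃ t₀ ≥ (0:ℝ), (∀ t ∈ Set.Icc 0 t₀, X t = 0) ∧ ∀ t ≥ t₀, X t = Ainv (t - t₀)) ∧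
      ¬(∃ t₀ ≥ (0:ℝ), (∀ t ∈ Set.Icc 0 t₀, X t = 0) ∧ ∀ t ≥ t₀, X t = -Binv (t - t₀))) ∨
    (¬(∀ t ≥ (0:ℝ), X t = 0) ∧
      (∃ t₀ ≥ (0:ℝ), (∀ t ∈ Set.Icc 0 t₀, X t = 0) ∧ ∀ t ≥ t₀, X t = Ainv (t - t₀)) ∧
      ¬(∃ t₀ ≥ (0:ℝ), (∀ t ∈ Set.Icc 0 t₀, X t = 0) ∧ ∀ t ≥ t₀, X t = -Binv (t - t₀))) ∨
    (¬(∀ t ≥ (0:ℝ), X t = 0) ∧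
      ¬(∃ t₀ ≥ (0:ℝ), (∀ t ∈ Set.Icc 0 t₀, X t = 0) ∧ ∀ t ≥ t₀, X t = Ainv (t - t₀)) ∧
      (∃ t₀ ≥ (0:ℝ), (∀ t ∈ Set.Icc 0 t₀, X t = 0) ∧ ∀ t ≥ t₀, X t = -Binv (t - t₀))) := by
  -- basic sign facts for a
  have a_pos : ∀ x > (0:ℝ), 0 < a x := fun x hx => by
    rw [hform_p x hx]
    exact mul_pos (Real.rpow_pos_of_pos hx β) (hLp_pos x hx)
  have a_neg : ∀ x < (0:ℝ), a x < 0 := fun x hx => by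
    rw [hform_m x hx]
    have : 0 < |x| := abs_pos.mpr (ne_of_lt hx)
    exact neg_neg_iff_pos.mpr (mul_pos (Real.rpow_pos_of_pos this β) (hLm_pos _ this))
  have hX0 : X 0 = 0 := by
    rw [hXeq 0 le_rfl, intervalIntegral.integral_same]
  -- positivity of Ainv / Binv at positive arguments
  have hAinv_pos : ∀ t > (0:ℝ), 0 < Ainv t := by
    intro t ht
    obtain ⟨h1, h2⟩ := hAinv_right t ht.le
    rcases eq_or_lt_of_le h1 with h0 | h0
    · rw [← h0] at h2; simp [Set.Ioc_self] at h2; linarith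
    · exact h0
  have hBinv_pos : ∀ t > (0:ℝ), 0 < Binv t := by
    intro t ht
    obtain ⟨h1, h2⟩ := hBinv_right t ht.le
    rcases eq_or_lt_of_le h1 with h0 | h0
    · rw [← h0] at h2; simp [Set.Ioc_self] at h2; linarith
    · exact h0
  have hAinv_nonneg : ∀ t ≥ (0:ℝ), 0 ≤ Ainv t := fun t ht => (hAinv_right t ht).1
  have hBinv_nonneg : ∀ t ≥ (0:ℝ), 0 ≤ Binv t := fun t ht => (hBinv_right t ht).1
  -- persistence lemmas
  have posPersist : ∀ s, 0 < s → 0 < X s → ∀ t ≥ s, X s ≤ X t := by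
    intro s hs hXs t hts
    exact my_key_mono hts
      (fun r hr => hXc.continuousAt (Ici_mem_nhds (lt_of_lt_of_le hs hr.1)))
      le_rfl
      (fun r hr hcr => ⟨a (X r), a_pos _ (lt_of_lt_of_le hXs hcr),
        my_hasDerivAt_X ha_cont hXc hXeq (lt_of_lt_of_le hs hr.1)⟩)
  have negPersist : ∀ s, 0 < s → X s < 0 → ∀ t ≥ s, X t ≤ X s := by
    intro s hs hXs t hts
    have h := my_key_mono (X := fun r => -X r) hts
      (fun r hr => (hXc.continuousAt (Ici_mem_nhds (lt_of_lt_of_le hs hr.1))).neg)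
      le_rfl
      (fun r hr hcr => by
        have hXr : X r < 0 := by simp only [neg_le_neg_iff] at hcr; linarith
        exact ⟨-(a (X r)), by linarith [a_neg (X r) hXr],
          (my_hasDerivAt_X ha_cont hXc hXeq (lt_of_lt_of_le hs hr.1)).neg⟩)
    simpa using h
  by_cases hzero : ∀ t ≥ (0:ℝ), X t = 0
  · -- case (i)
    refine Or.inl ⟨hzero, ?_, ?_⟩
    · rintro ⟨t₀, ht₀, -, h2⟩
      have hx := h2 (t₀ + 1) (by linarith)
      rw [hzero (t₀ + 1) (by linarith)] at hx
      have h1 : Ainv 1 = 0 := by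
        rw [show t₀ + 1 - t₀ = 1 by ring] at hx
        exact hx.symm
      exact absurd h1 (ne_of_gt (hAinv_pos 1 one_pos))
    · rintro ⟨t₀, ht₀, -, h2⟩
      have hx := h2 (t₀ + 1) (by linarith)
      rw [hzero (t₀ + 1) (by linarith)] at hx
      have h1 : Binv 1 = 0 := by
        rw [show t₀ + 1 - t₀ = 1 by ring] at hx
        linarith
      exact absurd h1 (ne_of_gt (hBinv_pos 1 one_pos))
  · push_neg at hzero
    obtain ⟨t₁, ht₁, hXt₁⟩ := hzero
    have hnoti : ¬(∀ t ≥ (0:ℝ), X t = 0) := fun h => hXt₁ (h t₁ ht₁)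
    set S : Set ℝ := {r | 0 ≤ r ∧ X r ≠ 0} with hS
    have hSne : S.Nonempty := ⟨t₁, ht₁, hXt₁⟩
    have hSbdd : BddBelow S := ⟨0, fun r hr => hr.1⟩
    set t₀ := sInf S with ht₀def
    have ht₀0 : 0 ≤ t₀ := le_csInf hSne (fun r hr => hr.1)
    have hzero_lt : ∀ r, 0 ≤ r → r < t₀ → X r = 0 := by
      intro r hr0 hrt
      by_contra h
      exact absurd (csInf_le hSbdd ⟨hr0, h⟩) (not_le.2 hrt)
    have hXt₀ : X t₀ = 0 := by
      rcases eq_or_lt_of_le ht₀0 with h0 | h0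
      · rw [← h0]; exact hX0
      · have hcw : ContinuousWithinAt X (Ico 0 t₀) t₀ :=
          (hXc t₀ ht₀0).mono Ico_subset_Ici_self
        have hne : (𝓝[Ico 0 t₀] t₀).NeBot := by
          apply mem_closure_iff_nhdsWithin_neBot.mp
          rw [closure_Ico (ne_of_lt h0)]
          exact ⟨ht₀0, le_rfl⟩
        have h1 : Tendsto X (𝓝[Ico 0 t₀] t₀) (𝓝 (X t₀)) := hcw
        have h2 : Tendsto X (𝓝[Ico 0 t₀] t₀) (𝓝 0) := by
          apply Tendsto.congr' _ tendsto_const_nhds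
          filter_upwards [self_mem_nhdsWithin] with r hr
          exact (hzero_lt r hr.1 hr.2).symm
        exact tendsto_nhds_unique h1 h2
    have hzeroIcc : ∀ r ∈ Icc (0:ℝ) t₀, X r = 0 := by
      intro r hr
      rcases eq_or_lt_of_le hr.2 with h | h
      · rw [h]; exact hXt₀
      · exact hzero_lt r hr.1 h
    have ht₀t₁ : t₀ < t₁ := by
      have h1 : t₀ ≤ t₁ := csInf_le hSbdd ⟨ht₁, hXt₁⟩
      rcases eq_or_lt_of_le h1 with h | h
      · exact absurd (h ▸ hXt₀) hXt₁
      · exact h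
    have hSnear : ∀ t, t₀ < t → ∃ s', (t₀ < s' ∧ s' < t) ∧ X s' ≠ 0 := by
      intro t ht
      obtain ⟨s', hs'S, hs'lt⟩ := (csInf_lt_iff hSbdd hSne).mp ht
      have h1 : t₀ ≤ s' := csInf_le hSbdd hs'S
      have h2 : t₀ < s' := by
        rcases eq_or_lt_of_le h1 with h | h
        · exact absurd (h ▸ hXt₀) hs'S.2
        · exact h
      exact ⟨s', ⟨h2, hs'lt⟩, hs'S.2⟩
    rcases lt_or_gt_of_ne hXt₁ with hXt₁neg | hXt₁pos
    · -- negative branch : case (iii)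
      have hon : ∀ t, t₀ < t → X t < 0 := by
        intro t ht
        have hmin : t₀ < min t t₁ := lt_min ht ht₀t₁
        obtain ⟨s', ⟨hs'1, hs'2⟩, hs'3⟩ := hSnear (min t t₁) hmin
        have hs'pos : 0 < s' := lt_of_le_of_lt ht₀0 hs'1
        rcases lt_or_gt_of_ne hs'3 with hneg | hpos
        · have := negPersist s' hs'pos hneg t
            (le_of_lt (lt_of_lt_of_le hs'2 (min_le_left t t₁)))
          linarith
        · have := posPersist s' hs'pos hpos t₁
            (le_of_lt (lt_of_lt_of_le hs'2 (min_le_right t t₁)))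
          linarith
      have hsep := my_sep_var (Y := fun t => -X t) (f := fun v => v ^ β * Lm v)
        (Finv := Binv) (t₀ := t₀)
        (by simp [hXt₀])
        (fun t ht => by simpa using (hon t ht))
        ((hXc.mono (Ici_subset_Ici.mpr ht₀0)).neg)
        (fun r hr => by
          have hr0 : 0 < r := lt_of_le_of_lt ht₀0 hr
          have hd := (my_hasDerivAt_X ha_cont hXc hXeq hr0).neg
          have hXr : X r < 0 := hon r hr
          have he : -(a (X r)) = (-X r) ^ β * Lm (-X r) := by
            rw [hform_m (X r) hXr, abs_of_neg hXr]; ring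
          rw [he] at hd
          exact hd)
        (by
          apply ContinuousOn.mul _ hLm_cont
          exact fun v hv =>
            (Real.continuousAt_rpow_const v β (Or.inl (ne_of_gt hv))).continuousWithinAt)
        (fun v hv => mul_pos (Real.rpow_pos_of_pos hv β) (hLm_pos v hv))
        hBinv_left
      have hAll : ∀ t ≥ t₀, X t = -Binv (t - t₀) := by
        intro t ht
        have h := hsep t ht
        simp only [neg_eq_iff_eq_neg] at h
        exact h
      refine Or.inr (Or.inr ⟨hnoti, ?_, ⟨t₀, ht₀0, hzeroIcc, hAll⟩⟩)
      rintro ⟨t₀', ht₀', -, h2⟩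
      set t := max t₀ t₀' + 1 with htdef
      have h3 : X t < 0 := hon t (by simp [htdef]; linarith [le_max_left t₀ t₀'])
      have h4 : X t = Ainv (t - t₀') := h2 t (by simp [htdef]; linarith [le_max_right t₀ t₀'])
      have h5 : 0 ≤ Ainv (t - t₀') := hAinv_nonneg _ (by simp [htdef]; linarith [le_max_right t₀ t₀'])
      linarith
    · -- positive branch : case (ii)
      have hop : ∀ t, t₀ < t → 0 < X t := by
        intro t ht
        have hmin : t₀ < min t t₁ := lt_min ht ht₀t₁
        obtain ⟨s', ⟨hs'1, hs'2⟩, hs'3⟩ := hSnear (min t t₁) hmin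
        have hs'pos : 0 < s' := lt_of_le_of_lt ht₀0 hs'1
        rcases lt_or_gt_of_ne hs'3 with hneg | hpos
        · have := negPersist s' hs'pos hneg t₁
            (le_of_lt (lt_of_lt_of_le hs'2 (min_le_right t t₁)))
          linarith
        · have := posPersist s' hs'pos hpos t
            (le_of_lt (lt_of_lt_of_le hs'2 (min_le_left t t₁)))
          linarith
      have hsep := my_sep_var (Y := X) (f := a) (Finv := Ainv) (t₀ := t₀)
        hXt₀ hop
        (hXc.mono (Ici_subset_Ici.mpr ht₀0))
        (fun r hr => my_hasDerivAt_X ha_cont hXc hXeq (lt_of_le_of_lt ht₀0 hr))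
        (ha_cont.continuousOn) a_pos hAinv_left
      refine Or.inr (Or.inl ⟨hnoti, ⟨t₀, ht₀0, hzeroIcc, hsep⟩, ?_⟩)
      rintro ⟨t₀', ht₀', -, h2⟩
      set t := max t₀ t₀' + 1 with htdef
      have h3 : 0 < X t := hop t (by simp [htdef]; linarith [le_max_left t₀ t₀'])
      have h4 : X t = -Binv (t - t₀') := h2 t (by simp [htdef]; linarith [le_max_right t₀ t₀'])
      have h5 : 0 ≤ Binv (t - t₀') := hBinv_nonneg _ (by simp [htdef]; linarith [le_max_right t₀ t₀'])
      linarith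
end

section
/- Every continuous function X : [0,∞) → ℝ satisfying X(t) = ∫₀^t a(X(s)) ds for all t ≥ 0 satisfies −B⁻¹(t) ≤ X(t) ≤ A₊⁻¹(t) for all t ≥ 0; that is, x⁺(t) := A₊⁻¹(t) is the maximal and x⁻(t) := −B⁻¹(t) is the minimal solution of the equation starting at 0. -/
/-!
Write `G(u) = ∫₀^u dy / a(y)`. On any stretch of time where a solution `X` is positive,
`G ∘ X` has derivative `X' / a(X) = 1`. Starting from the last zero `s` of `X` before `t`
this gives `G(X t) = t - s ≤ t = G(A₊⁻¹ t)`, and `G` is strictly increasing, so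
`X t ≤ A₊⁻¹ t`. The lower bound is the same argument applied to `-X`, which solves the
equation with the reflected drift `x ↦ -a(-x)`, whose `G` is `B`.
-/

open Filter Set MeasureTheory intervalIntegral Topology

-- If `f` were not integrable, both `∫_{(0,u]} f` and `∫_{(0,u+1]} f` would be the junk value `0`.
lemma intervalIntegrable_of_leftInverse {f g : ℝ → ℝ}
    (hg : ∀ u ≥ (0:ℝ), g (∫ y in Ioc 0 u, f y) = u) {u : ℝ} (hu : 0 < u) :
    IntervalIntegrable f volume 0 u := by
  rw [intervalIntegrable_iff_integrableOn_Ioc_of_le hu.le]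
  by_contra h
  have h' : ¬ IntegrableOn f (Ioc 0 (u + 1)) :=
    fun h' ↦ h (h'.mono_set (Ioc_subset_Ioc_right (by linarith)))
  have hgu := hg u hu.le
  have hgu' := hg (u + 1) (by linarith)
  rw [integral_undef h] at hgu
  rw [integral_undef h'] at hgu'
  linarith

lemma strictMonoOn_primitive_of_pos {f : ℝ → ℝ} (hf : ∀ x > (0:ℝ), 0 < f x)
    (hint : ∀ u > (0:ℝ), IntervalIntegrable f volume 0 u) :
    StrictMonoOn (fun u ↦ ∫ y in 0..u, f y) (Ici 0) := by
  intro p hp q hq hpq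
  have hq₀ : 0 < q := lt_of_le_of_lt hp hpq
  have hint_p : IntervalIntegrable f volume 0 p :=
    (hint q hq₀).mono_set (uIcc_subset_uIcc_left (by simp [uIcc_of_le hq₀.le, hp.out, hpq.le]))
  have hint_pq : IntervalIntegrable f volume p q := hint_p.symm.trans (hint q hq₀)
  have hpos : 0 < ∫ y in p..q, f y :=
    intervalIntegral_pos_of_pos_on hint_pq (fun x hx ↦ hf x (lt_of_le_of_lt hp hx.1)) hpq
  have hsplit := integral_interval_sub_left (hint q hq₀) hint_p
  dsimp only
  linarith

lemma exists_last_zero {W : ℝ → ℝ} {t : ℝ} (ht : 0 ≤ t) (hW : ContinuousOn W (Icc 0 t))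
    (hW₀ : W 0 = 0) (hWt : 0 < W t) :
    ∃ s ∈ Ico 0 t, W s = 0 ∧ ∀ r ∈ Ioc s t, 0 < W r := by
  set S := Icc 0 t ∩ W ⁻¹' Iic 0
  have hS : IsClosed S := hW.preimage_isClosed_of_isClosed isClosed_Icc isClosed_Iic
  have hSbdd : BddAbove S := ⟨t, fun x hx ↦ hx.1.2⟩
  have hsS : sSup S ∈ S := hS.csSup_mem ⟨0, ⟨le_rfl, ht⟩, by simp [hW₀]⟩ hSbdd
  have hafter : ∀ r ∈ Ioc (sSup S) t, 0 < W r := fun r hr ↦ by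
    by_contra! h
    exact (le_csSup hSbdd ⟨⟨hsS.1.1.trans hr.1.le, hr.2⟩, h⟩).not_gt hr.1
  have hlt : sSup S < t := hsS.1.2.lt_of_ne fun h ↦ (hsS.2.trans_lt (h ▸ hWt)).false
  refine ⟨sSup S, ⟨hsS.1.1, hlt⟩, le_antisymm hsS.2 ?_, hafter⟩
  have : (𝓝[Ioc (sSup S) t] sSup S).NeBot := by
    rw [← mem_closure_iff_nhdsWithin_neBot, closure_Ioc hlt.ne]
    exact left_mem_Icc.2 hlt.le
  have hsub : Ioc (sSup S) t ⊆ Icc 0 t := fun r hr ↦ ⟨hsS.1.1.trans hr.1.le, hr.2⟩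
  exact ge_of_tendsto ((hW _ hsS.1).mono hsub)
    (eventually_nhdsWithin_of_forall fun r hr ↦ (hafter r hr).le)

lemma integral_inv_le_of_hasDerivAt {F W : ℝ → ℝ} {t : ℝ} (ht : 0 ≤ t)
    (hF : ContinuousOn F (Ioi 0)) (hFpos : ∀ x > (0:ℝ), 0 < F x)
    (hint : ∀ u > (0:ℝ), IntervalIntegrable (fun y ↦ 1 / F y) volume 0 u)
    (hW : ContinuousOn W (Icc 0 t)) (hW₀ : W 0 = 0)
    (hW' : ∀ s ∈ Ioo 0 t, 0 < W s → HasDerivAt W (F (W s)) s) (hWt : 0 < W t) :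
    ∫ y in 0..W t, 1 / F y ≤ t := by
  obtain ⟨s, hs, hWs, hpos⟩ := exists_last_zero ht hW hW₀ hWt
  set G : ℝ → ℝ := fun u ↦ ∫ y in 0..u, 1 / F y
  have hFinv : ContinuousOn (fun y ↦ 1 / F y) (Ioi 0) :=
    continuousOn_const.div hF fun x hx ↦ (hFpos x hx).ne'
  have hG' : ∀ x > (0:ℝ), HasDerivAt G (1 / F x) x := fun x hx ↦
    integral_hasDerivAt_right (hint x hx) (hFinv.stronglyMeasurableAtFilter isOpen_Ioi x hx)
      (hFinv.continuousAt (Ioi_mem_nhds hx))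
  have hG₀ : ContinuousWithinAt G (Ici 0) 0 := by
    have hI := continuousOn_primitive_interval' (hint 1 one_pos) left_mem_uIcc
    rw [uIcc_of_le zero_le_one] at hI
    exact (hI 0 (left_mem_Icc.2 zero_le_one)).mono_of_mem_nhdsWithin (Icc_mem_nhdsGE one_pos)
  have hsub : Icc s t ⊆ Icc 0 t := Icc_subset_Icc_left hs.1
  have hderiv : ∀ r ∈ Ioo s t, HasDerivAt (G ∘ W) 1 r := by
    intro r hr
    have hWr := hpos r ⟨hr.1, hr.2.le⟩
    have := (hG' _ hWr).comp r (hW' r ⟨hs.1.trans_lt hr.1, hr.2⟩ hWr)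
    rwa [one_div_mul_cancel (hFpos _ hWr).ne'] at this
  have hcont : ContinuousOn (G ∘ W) (Icc s t) := by
    intro r hr
    rcases hr.1.eq_or_lt with rfl | hsr
    · have hGWs : ContinuousWithinAt G (Ici 0) (W s) := by rwa [hWs]
      refine hGWs.comp ((hW s (hsub hr)).mono hsub) fun x hx ↦ ?_
      rcases hx.1.eq_or_lt with rfl | h
      · exact hWs.ge
      · exact (hpos x ⟨h, hx.2⟩).le
    · exact (hG' _ (hpos r ⟨hsr, hr.2⟩)).continuousAt.comp_continuousWithinAt
        ((hW r (hsub hr)).mono hsub)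
  obtain ⟨c, -, hc⟩ := exists_hasDerivAt_eq_slope (G ∘ W) (fun _ ↦ 1) hs.2 hcont hderiv
  have hGt : G (W t) = t - s := by
    simp only [Function.comp, hWs, G, integral_same, sub_zero] at hc
    field_simp [(sub_pos.2 hs.2).ne'] at hc
    linarith
  linarith [hs.1]

lemma hasDerivAt_of_eq_integral {f X : ℝ → ℝ} (hf : Continuous f) (hX : ContinuousOn X (Ici 0))
    (hXeq : ∀ t ≥ (0:ℝ), X t = ∫ s in 0..t, f (X s)) {t : ℝ} (ht : 0 < t) :
    HasDerivAt X (f (X t)) t := by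
  have hfX : ContinuousOn (f ∘ X) (Ici 0) := hf.comp_continuousOn hX
  have hderiv : HasDerivAt (fun u ↦ ∫ s in 0..u, f (X s)) (f (X t)) t :=
    integral_hasDerivAt_right
      ((hfX.mono (by simp [uIcc_of_le ht.le, Icc_subset_Ici_self])).intervalIntegrable)
      ((hfX.mono Ioi_subset_Ici_self).stronglyMeasurableAtFilter isOpen_Ioi t ht)
      (hfX.continuousAt (Ici_mem_nhds ht))
  exact hderiv.congr_of_eventuallyEq
    (eventually_of_mem (Ioi_mem_nhds ht) fun u hu ↦ hXeq u (le_of_lt hu))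

theorem le_of_eq_integral_of_leftInverse {a X Ainv : ℝ → ℝ} (ha : Continuous a)
    (hapos : ∀ x > (0:ℝ), 0 < a x)
    (hAinv_left : ∀ u ≥ (0:ℝ), Ainv (∫ y in Ioc 0 u, 1 / a y) = u)
    (hAinv_right : ∀ t ≥ (0:ℝ), 0 ≤ Ainv t ∧ (∫ y in Ioc 0 (Ainv t), 1 / a y) = t)
    (hXc : ContinuousOn X (Ici 0)) (hXeq : ∀ t ≥ (0:ℝ), X t = ∫ s in 0..t, a (X s))
    {t : ℝ} (ht : 0 ≤ t) : X t ≤ Ainv t := by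
  rcases le_or_gt (X t) 0 with hXt | hXt
  · exact hXt.trans (hAinv_right t ht).1
  have hint := fun u (hu : 0 < u) ↦ intervalIntegrable_of_leftInverse hAinv_left hu
  have hmono := strictMonoOn_primitive_of_pos (fun x hx ↦ one_div_pos.2 (hapos x hx)) hint
  have hle := integral_inv_le_of_hasDerivAt ht ha.continuousOn hapos hint
    (hXc.mono Icc_subset_Ici_self) (by simpa using hXeq 0 le_rfl)
    (fun s hs _ ↦ hasDerivAt_of_eq_integral ha hXc hXeq hs.1) hXt
  obtain ⟨hAinv_nonneg, hAinv_eq⟩ := hAinv_right t ht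
  rw [← integral_of_le hAinv_nonneg] at hAinv_eq
  rw [← hmono.le_iff_le hXt.le hAinv_nonneg]
  simpa only [hAinv_eq] using hle

theorem stmt_14_general (a : ℝ → ℝ) (β : ℝ)
    (ha_cont : Continuous a)
    (Lp Lm : ℝ → ℝ)
    (hLp_pos : ∀ x > (0:ℝ), 0 < Lp x)
    (hLm_pos : ∀ x > (0:ℝ), 0 < Lm x)
    (hform_p : ∀ x > (0:ℝ), a x = x ^ β * Lp x)
    (hform_m : ∀ x < (0:ℝ), a x = -(|x| ^ β * Lm |x|))
    (Ainv Binv : ℝ → ℝ)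
    (hAinv_left : ∀ u ≥ (0:ℝ), Ainv (∫ y in Set.Ioc (0:ℝ) u, 1 / a y) = u)
    (hAinv_right : ∀ t ≥ (0:ℝ), 0 ≤ Ainv t ∧ (∫ y in Set.Ioc (0:ℝ) (Ainv t), 1 / a y) = t)
    (hBinv_left : ∀ u ≥ (0:ℝ), Binv (∫ v in Set.Ioc (0:ℝ) u, 1 / (v ^ β * Lm v)) = u)
    (hBinv_right : ∀ t ≥ (0:ℝ),
      0 ≤ Binv t ∧ (∫ v in Set.Ioc (0:ℝ) (Binv t), 1 / (v ^ β * Lm v)) = t)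
    (X : ℝ → ℝ) (hXc : ContinuousOn X (Set.Ici 0))
    (hXeq : ∀ t ≥ (0:ℝ), X t = ∫ s in (0:ℝ)..t, a (X s)) :
    ∀ t ≥ (0:ℝ), -Binv t ≤ X t ∧ X t ≤ Ainv t := by
  intro t ht
  have hapos : ∀ x > (0:ℝ), 0 < a x := fun x hx ↦ by
    rw [hform_p x hx]
    exact mul_pos (Real.rpow_pos_of_pos hx β) (hLp_pos x hx)
  have hreflect : ∀ v > (0:ℝ), -a (-v) = v ^ β * Lm v := fun v hv ↦ by
    rw [hform_m (-v) (neg_lt_zero.2 hv), abs_neg, abs_of_pos hv, neg_neg]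
  have hB_eq : ∀ u, ∫ v in Ioc 0 u, 1 / -a (-v) = ∫ v in Ioc 0 u, 1 / (v ^ β * Lm v) :=
    fun u ↦ setIntegral_congr_fun measurableSet_Ioc fun v hv ↦ by rw [hreflect v hv.1]
  refine ⟨neg_le.2 ?_, le_of_eq_integral_of_leftInverse ha_cont hapos hAinv_left hAinv_right
    hXc hXeq ht⟩
  refine le_of_eq_integral_of_leftInverse (a := fun x ↦ -a (-x))
    (ha_cont.comp continuous_neg).neg
    (fun v hv ↦ (hreflect v hv).symm ▸ mul_pos (Real.rpow_pos_of_pos hv β) (hLm_pos v hv))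
    (by simpa only [hB_eq] using hBinv_left) (by simpa only [hB_eq] using hBinv_right)
    hXc.neg (fun u hu ↦ ?_) ht
  simp only [Pi.neg_apply, neg_neg, intervalIntegral.integral_neg, hXeq u hu]

/-- `x⁺(t) = A₊⁻¹(t)` and `x⁻(t) = −B⁻¹(t)` are the maximal and minimal
solutions of `X(t) = ∫₀^t a(X(s)) ds` starting at `0`. -/
theorem stmt_14 (a : ℝ → ℝ) (β Ap Am Cg : ℝ)
    (hβ : β ∈ Set.Ioo (0:ℝ) 1) (hAp : 0 < Ap) (hAm : 0 < Am) (hCg : 0 < Cg)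
    (ha_cont : Continuous a) (ha0 : a 0 = 0)
    (hgrowth : ∀ x, |a x| ≤ Cg * (1 + |x|))
    (Lp Lm l : ℝ → ℝ)
    (hLp_cont : ContinuousOn Lp (Set.Ioi 0)) (hLp_pos : ∀ x > (0:ℝ), 0 < Lp x)
    (hLm_cont : ContinuousOn Lm (Set.Ioi 0)) (hLm_pos : ∀ x > (0:ℝ), 0 < Lm x)
    (hform_p : ∀ x > (0:ℝ), a x = x ^ β * Lp x)
    (hform_m : ∀ x < (0:ℝ), a x = -(|x| ^ β * Lm |x|))
    (hl_cont : ContinuousOn l (Set.Ioi 0)) (hl_pos : ∀ x > (0:ℝ), 0 < l x)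
    (hl_sv : ∀ lam > (0:ℝ), Tendsto (fun x => l (lam * x) / l x) atTop (nhds 1))
    (hLp_asymp : Tendsto (fun x => Lp x / (Ap * l (1 / x))) (nhdsWithin 0 (Set.Ioi 0)) (nhds 1))
    (hLm_asymp : Tendsto (fun x => Lm x / (Am * l (1 / x))) (nhdsWithin 0 (Set.Ioi 0)) (nhds 1))
    (Ainv Binv : ℝ → ℝ)
    (hAinv_left : ∀ u ≥ (0:ℝ), Ainv (∫ y in Set.Ioc (0:ℝ) u, 1 / a y) = u)
    (hAinv_right : ∀ t ≥ (0:ℝ), 0 ≤ Ainv t ∧ (∫ y in Set.Ioc (0:ℝ) (Ainv t), 1 / a y) = t)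
    (hBinv_left : ∀ u ≥ (0:ℝ), Binv (∫ v in Set.Ioc (0:ℝ) u, 1 / (v ^ β * Lm v)) = u)
    (hBinv_right : ∀ t ≥ (0:ℝ),
      0 ≤ Binv t ∧ (∫ v in Set.Ioc (0:ℝ) (Binv t), 1 / (v ^ β * Lm v)) = t)
    (X : ℝ → ℝ) (hXc : ContinuousOn X (Set.Ici 0))
    (hXeq : ∀ t ≥ (0:ℝ), X t = ∫ s in (0:ℝ)..t, a (X s)) :
    ∀ t ≥ (0:ℝ), -Binv t ≤ X t ∧ X t ≤ Ainv t :=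
  stmt_14_general a β ha_cont Lp Lm hLp_pos hLm_pos hform_p hform_m Ainv Binv hAinv_left hAinv_right
    hBinv_left hBinv_right X hXc hXeq
end

section
/- Suppose ε ↦ ε'(ε) and ε ↦ ε''(ε) are functions from (0,1] to (0,∞) with ε''(ε) → 0 and (ε''(ε)/ε'(ε)) / ((ε''(ε))^β · l(1/ε''(ε))) → 1 as ε → 0+. Define a_ε(y) = (ε'(ε)/ε''(ε))·a(ε''(ε)·y) and let ā(y) = A₊·y^β for y ≥ 0 and ā(y) = −A₋·|y|^β for y < 0. Then for every R > 0, sup_{|y| ≤ R} |a_ε(y) − ā(y)| → 0 as ε → 0+. -/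
/-!
Put `x = ε''`. By the hypothesis on `ε'/ε''`, `(ε'/ε'') a(xy) = (1 + o(1)) a(xy) / (x^β l(1/x))`,
and for `y > 0`
`a(xy) / (x^β l(1/x)) = [a(xy) / ((xy)^β l(1/(xy)))] · y^β l(1/(xy)) / l(1/x)`.
The first factor tends to `A₊` uniformly in `y ∈ (0, R]` because `xy ≤ xR`. The second tends to
`y^β` uniformly: on `[δ, R]` by Karamata's uniform convergence theorem for the slowly varying `l`,
and on `(0, δ)` because the Potter bound `l(λX)/l(X) ≤ e^{β/2} λ^{β/2}` (`λ ≥ 1`) makes it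
`O(δ^{β/2})`. Both facts are proved for `h(u) = log l(e^u)`, for which `h(u + t) - h(u) → 0`;
uniformity in `t` comes from Egorov's theorem and the fact that a set of large measure meets its
own translate. The negative half-line is the same statement for `x ↦ -a(-x)`.
-/

open Filter Set MeasureTheory Topology

section UniformConvergence

variable {ι α β : Type*}

theorem TendstoUniformlyOn.union [UniformSpace β] {F : ι → α → β} {f : α → β} {p : Filter ι}
    {s t : Set α} (hs : TendstoUniformlyOn F f p s) (ht : TendstoUniformlyOn F f p t) :
    TendstoUniformlyOn F f p (s ∪ t) := fun u hu =>
  ((hs u hu).and (ht u hu)).mono fun _ hn x hx => hx.elim (hn.1 x) (hn.2 x)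

theorem TendstoUniformlyOn.comp_tendsto [UniformSpace β] {γ : Type*} {F : ι → α → β}
    {f : α → β} {p : Filter ι} {s : Set α} (hF : TendstoUniformlyOn F f p s) {q : Filter γ}
    {g : γ → ι} (hg : Tendsto g q p) : TendstoUniformlyOn (fun n => F (g n)) f q s :=
  fun u hu => hg.eventually (hF u hu)

theorem TendstoUniformlyOn.mul_of_bounded [SeminormedRing β] {F G : ι → α → β} {f g : α → β}
    {p : Filter ι} {s : Set α} (hF : TendstoUniformlyOn F f p s) (hG : TendstoUniformlyOn G g p s)
    {Cf Cg : ℝ} (hf : ∀ x ∈ s, ‖f x‖ ≤ Cf) (hg : ∀ x ∈ s, ‖g x‖ ≤ Cg) :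
    TendstoUniformlyOn (fun n x => F n x * G n x) (fun x => f x * g x) p s := by
  rw [Metric.tendstoUniformlyOn_iff] at hF hG ⊢
  intro ε hε
  set K := |Cf| + |Cg| + 1
  have hK : 0 < K := by positivity
  set δ := min 1 (ε / (2 * K))
  have hδ : 0 < δ := lt_min one_pos (by positivity)
  filter_upwards [hF δ hδ, hG δ hδ] with n hFn hGn x hx
  have hFx : ‖f x - F n x‖ ≤ δ := by rw [← dist_eq_norm]; exact (hFn x hx).le
  have hGx : ‖g x - G n x‖ ≤ δ := by rw [← dist_eq_norm]; exact (hGn x hx).le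
  have hfx : ‖f x‖ ≤ |Cf| := (hf x hx).trans (le_abs_self Cf)
  have hGn' : ‖G n x‖ ≤ |Cg| + 1 := by
    calc ‖G n x‖ = ‖g x - (g x - G n x)‖ := by rw [sub_sub_cancel]
      _ ≤ ‖g x‖ + ‖g x - G n x‖ := norm_sub_le _ _
      _ ≤ |Cg| + 1 := add_le_add ((hg x hx).trans (le_abs_self Cg)) (hGx.trans (min_le_left _ _))
  rw [dist_eq_norm]
  calc ‖f x * g x - F n x * G n x‖ = ‖f x * (g x - G n x) + (f x - F n x) * G n x‖ := by
        congr 1; noncomm_ring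
    _ ≤ ‖f x‖ * ‖g x - G n x‖ + ‖f x - F n x‖ * ‖G n x‖ :=
        (norm_add_le _ _).trans (add_le_add (norm_mul_le _ _) (norm_mul_le _ _))
    _ ≤ |Cf| * δ + δ * (|Cg| + 1) := by gcongr
    _ = δ * K := by ring
    _ ≤ ε / (2 * K) * K := by gcongr; exact min_le_right _ _
    _ < ε := by field_simp; linarith

end UniformConvergence

theorem tendstoUniformlyOn_comp_mul {φ : ℝ → ℝ} {c : ℝ} (hφ : Tendsto φ (𝓝[>] 0) (𝓝 c))
    (R : ℝ) : TendstoUniformlyOn (fun x y => φ (x * y)) (fun _ => c) (𝓝[>] 0) (Ioc 0 R) := by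
  rw [Metric.tendstoUniformlyOn_iff]
  intro ε hε
  obtain ⟨r, hr, hφr⟩ := Metric.tendsto_nhdsWithin_nhds.mp hφ ε hε
  filter_upwards [Ioo_mem_nhdsGT (by positivity : (0 : ℝ) < r / max R 1)] with x ⟨hx0, hxr⟩
  rintro y ⟨hy0, hyR⟩
  rw [dist_comm]
  refine hφr (mul_pos hx0 hy0) ?_
  rw [Real.dist_eq, sub_zero, abs_of_pos (mul_pos hx0 hy0)]
  calc x * y ≤ x * max R 1 := by gcongr; exact hyR.trans (le_max_left R 1)
    _ < r / max R 1 * max R 1 := by gcongr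
    _ = r := by field_simp

theorem exists_mem_add_mem_of_lt_two_mul_measureReal {E : Set ℝ} {a b : ℝ} (hE : MeasurableSet E)
    (hab : a ≤ b) (hEab : E ⊆ Icc a b) {t : ℝ} (hvol : b - a + 2 * |t| < 2 * volume.real E) :
    ∃ s ∈ E, s + t ∈ E := by
  have ht₁ := le_abs_self t
  have ht₂ := neg_abs_le t
  refine nonempty_inter_of_measureReal_lt_add (μ := volume) (s := E) (t := (· + t) ⁻¹' E)
    (u := Icc (a - |t|) (b + |t|))
    (hE.preimage (measurable_add_const t)) (fun x hx => ?_) (fun x hx => ?_) ?_ (by simp)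
  · exact ⟨by linarith [(hEab hx).1], by linarith [(hEab hx).2]⟩
  · exact ⟨by linarith [(hEab hx).1], by linarith [(hEab hx).2]⟩
  · have hshift : volume.real ((· + t) ⁻¹' E) = volume.real E := by
      simp only [Measure.real, measure_preimage_add_right]
    rw [hshift, Real.volume_real_Icc_of_le (by linarith)]
    linarith

namespace SlowVariation

section Additive

variable {h : ℝ → ℝ} (hmeas : Measurable h)
  (hsv : ∀ t, Tendsto (fun u => h (u + t) - h u) atTop (𝓝 0))
include hmeas hsv

theorem exists_abs_sub_lt_of_tendsto_atTop {T η : ℝ} (hη : 0 < η) {u t : ℕ → ℝ}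
    (hu : Tendsto u atTop atTop) (ht : ∀ n, t n ∈ Icc (-T) T) :
    ∃ n, |h (u n + t n) - h (u n)| < η := by
  have hT : 0 ≤ T := by linarith [(ht 0).1, (ht 0).2]
  -- Egorov makes `F n → 0` uniformly on `E ⊆ [-T-1, T+1]` of measure `≥ 2T + 3/2`; then some
  -- `s` has `s, s + t N ∈ E`, and the increment of `h` at `t N` is bounded by the halves of `F`.
  set F : ℕ → ℝ → ℝ := fun n s => |h (u n + s) - h (u n)| + |h (u n + t n + s) - h (u n + t n)|
  have hut : Tendsto (fun n => u n + t n) atTop atTop :=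
    tendsto_atTop_add_right_of_le _ (-T) hu fun n => (ht n).1
  have hF : ∀ s, Tendsto (fun n => F n s) atTop (𝓝 0) := fun s => by
    simpa using ((hsv s).comp hu).abs.add ((hsv s).comp hut).abs
  set I := Icc (-(T + 1)) (T + 1)
  obtain ⟨bad, hbad_sub, hbad_meas, hbad_vol, hunif⟩ :=
    tendstoUniformlyOn_of_ae_tendsto (μ := volume) (s := I) (g := 0)
      (fun n => by fun_prop) stronglyMeasurable_const measurableSet_Icc (by simp [I])
      (ae_of_all _ fun s _ => hF s) one_half_pos
  obtain ⟨N, hN⟩ := (Metric.tendstoUniformlyOn_iff.mp hunif (η / 2) (half_pos hη)).exists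
  set E := I \ bad
  have hvol : 2 * T + 3 / 2 ≤ volume.real E := by
    have : volume.real bad ≤ 1 / 2 := ENNReal.toReal_le_of_le_ofReal (by norm_num) hbad_vol
    rw [measureReal_sdiff hbad_sub hbad_meas (by simp [I]),
      Real.volume_real_Icc_of_le (by linarith)]
    linarith
  obtain ⟨s, hsE, hsE'⟩ := exists_mem_add_mem_of_lt_two_mul_measureReal
    (a := -(T + 1)) (b := T + 1) (t := t N) (measurableSet_Icc.diff hbad_meas) (by linarith)
    sdiff_subset (by linarith [abs_le.mpr (ht N)])
  have hs : F N s < η / 2 := by simpa [abs_of_nonneg (by positivity : 0 ≤ F N s)] using hN s hsE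
  have hs' : F N (s + t N) < η / 2 := by
    simpa [abs_of_nonneg (by positivity : 0 ≤ F N (s + t N))] using hN _ hsE'
  refine ⟨N, ?_⟩
  have hsplit : h (u N + t N) - h (u N) =
      (h (u N + (s + t N)) - h (u N)) - (h (u N + t N + s) - h (u N + t N)) := by
    rw [show u N + (s + t N) = u N + t N + s by ring]
    ring
  have hfirst : |h (u N + (s + t N)) - h (u N)| ≤ F N (s + t N) :=
    le_add_of_nonneg_right (abs_nonneg _)
  have hsecond : |h (u N + t N + s) - h (u N + t N)| ≤ F N s :=
    le_add_of_nonneg_left (abs_nonneg _)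
  rw [hsplit]
  linarith [abs_sub (h (u N + (s + t N)) - h (u N)) (h (u N + t N + s) - h (u N + t N))]

theorem eventually_forall_abs_add_sub_lt (T : ℝ) {η : ℝ} (hη : 0 < η) :
    ∀ᶠ u in atTop, ∀ t ∈ Icc (-T) T, |h (u + t) - h u| < η := by
  by_contra hbad
  simp only [not_eventually, frequently_atTop, not_forall, not_lt] at hbad
  choose u hu t ht hge using fun n : ℕ => hbad n
  obtain ⟨n, hn⟩ := exists_abs_sub_lt_of_tendsto_atTop hmeas hsv hη
    (tendsto_atTop_mono hu tendsto_natCast_atTop_atTop) ht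
  exact (hge n).not_gt hn

theorem eventually_forall_add_sub_le {η : ℝ} (hη : 0 < η) :
    ∀ᶠ u in atTop, ∀ t, 0 ≤ t → h (u + t) - h u ≤ η * (t + 1) := by
  obtain ⟨U, hU⟩ := (eventually_forall_abs_add_sub_lt hmeas hsv 1 hη).exists_forall_of_atTop
  filter_upwards [eventually_ge_atTop U] with u hu
  suffices ∀ n : ℕ, ∀ t ∈ Icc 0 (n : ℝ), h (u + t) - h u ≤ η * (t + 1) from
    fun t ht => this ⌈t⌉₊ t ⟨ht, Nat.le_ceil t⟩
  intro n
  induction n with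
  | zero =>
    intro t ht
    obtain rfl : t = 0 := by simpa using ht
    simpa using hη.le
  | succ n ih =>
    rintro t ⟨ht0, htn⟩
    rcases le_or_gt t 1 with ht1 | ht1
    · have := (abs_lt.mp (hU u hu t ⟨by linarith, ht1⟩)).2
      nlinarith
    · have hstep := (abs_lt.mp (hU (u + (t - 1)) (by linarith) 1 ⟨by norm_num, le_rfl⟩)).2
      have hprev := ih (t - 1) ⟨by linarith, by push_cast at htn; linarith⟩
      rw [show u + (t - 1) + 1 = u + t by ring] at hstep
      linarith

end Additive

/-- Karamata's `h(u) = log l(e^u)`: `l(λx)/l(x) → 1` becomes `h(u + log λ) - h(u) → 0`. -/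
noncomputable def additive (l : ℝ → ℝ) (u : ℝ) : ℝ := Real.log (l (Real.exp u))

section Multiplicative

variable {l : ℝ → ℝ} (hl_cont : ContinuousOn l (Ioi 0)) (hl_pos : ∀ x > (0 : ℝ), 0 < l x)
  (hl_sv : ∀ lam > (0 : ℝ), Tendsto (fun x => l (lam * x) / l x) atTop (𝓝 1))

include hl_cont hl_pos in
theorem continuous_additive : Continuous (additive l) :=
  continuous_iff_continuousAt.mpr fun u =>
    ((Real.continuousAt_log (hl_pos _ (Real.exp_pos u)).ne').comp
      (hl_cont.continuousAt (Ioi_mem_nhds (Real.exp_pos u)))).comp Real.continuous_exp.continuousAt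

include hl_pos in
theorem div_eq_exp_additive_sub {x lam : ℝ} (hx : 0 < x) (hlam : 0 < lam) :
    l (lam * x) / l x =
      Real.exp (additive l (Real.log x + Real.log lam) - additive l (Real.log x)) := by
  rw [additive, additive, Real.exp_sub, Real.exp_log (hl_pos _ (Real.exp_pos _)),
    Real.exp_log (hl_pos _ (Real.exp_pos _)), Real.exp_add, Real.exp_log hx, Real.exp_log hlam,
    mul_comm x]

include hl_pos hl_sv in
theorem tendsto_additive_add_sub (t : ℝ) :
    Tendsto (fun u => additive l (u + t) - additive l u) atTop (𝓝 0) := by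
  have hlog := ((Real.continuousAt_log one_ne_zero).tendsto.comp
    ((hl_sv _ (Real.exp_pos t)).comp Real.tendsto_exp_atTop))
  rw [Real.log_one] at hlog
  refine hlog.congr fun u => ?_
  rw [Function.comp_apply, Function.comp_apply, div_eq_exp_additive_sub hl_pos (Real.exp_pos u)
    (Real.exp_pos t), Real.log_exp, Real.log_exp, Real.log_exp]

include hl_cont hl_pos hl_sv

theorem tendstoUniformlyOn_div {c d : ℝ} (hc : 0 < c) :
    TendstoUniformlyOn (fun x lam => l (lam * x) / l x) 1 atTop (Icc c d) := by
  rw [Metric.tendstoUniformlyOn_iff]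
  intro η hη
  set T := max |Real.log c| |Real.log d|
  have hunif := eventually_forall_abs_add_sub_lt (continuous_additive hl_cont hl_pos).measurable
    (tendsto_additive_add_sub hl_pos hl_sv) T (lt_min one_pos (half_pos hη))
  filter_upwards [Real.tendsto_log_atTop.eventually hunif, eventually_gt_atTop 0] with x hx hx0
  intro lam hlam
  have hlam0 : 0 < lam := hc.trans_le hlam.1
  have hloglam : Real.log lam ∈ Icc (-T) T :=
    abs_le.mp (abs_le_max_abs_abs (Real.log_le_log hc hlam.1) (Real.log_le_log hlam0 hlam.2))
  have hs := hx _ hloglam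
  rw [Pi.one_apply, dist_comm, Real.dist_eq, div_eq_exp_additive_sub hl_pos hx0 hlam0]
  calc _ ≤ 2 * |additive l (Real.log x + Real.log lam) - additive l (Real.log x)| :=
        Real.abs_exp_sub_one_le (hs.trans_le (min_le_left _ _)).le
    _ < η := by linarith [hs.trans_le (min_le_right _ _)]

theorem eventually_forall_div_le {η : ℝ} (hη : 0 < η) :
    ∀ᶠ x in atTop, ∀ lam, 1 ≤ lam → l (lam * x) / l x ≤ Real.exp η * lam ^ η := by
  have hpotter := eventually_forall_add_sub_le (continuous_additive hl_cont hl_pos).measurable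
    (tendsto_additive_add_sub hl_pos hl_sv) hη
  filter_upwards [Real.tendsto_log_atTop.eventually hpotter, eventually_gt_atTop 0] with x hx hx0
  intro lam hlam
  have hlam0 : 0 < lam := one_pos.trans_le hlam
  rw [div_eq_exp_additive_sub hl_pos hx0 hlam0, Real.rpow_def_of_pos hlam0, ← Real.exp_add]
  exact Real.exp_le_exp.mpr (by linarith [hx _ (Real.log_nonneg hlam)])

theorem tendstoUniformlyOn_rpow_mul_div {β R : ℝ} (hβ : 0 < β) :
    TendstoUniformlyOn (fun x y => y ^ β * (l (y⁻¹ * x) / l x)) (fun y => y ^ β) atTop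
      (Ioc 0 R) := by
  rw [Metric.tendstoUniformlyOn_iff]
  intro η hη
  set C := Real.exp (β / 2) + 1
  obtain ⟨δ, hδη, hδ0, hδ1⟩ : ∃ δ : ℝ, C * δ ^ (β / 2) < η ∧ 0 < δ ∧ δ ≤ 1 := by
    have hlim : Tendsto (fun δ : ℝ => C * δ ^ (β / 2)) (𝓝[>] 0) (𝓝 0) := by
      have := ((Real.continuousAt_rpow_const 0 (β / 2) (Or.inr (by positivity))).tendsto.mono_left
        (nhdsWithin_le_nhds (s := Ioi 0))).const_mul C
      rwa [Real.zero_rpow (by positivity), mul_zero] at this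
    exact ((hlim.eventually (gt_mem_nhds hη)).and (Ioc_mem_nhdsGT one_pos)).exists
  set M := max R 1 ^ β
  have hM : 0 < M := Real.rpow_pos_of_pos (lt_max_of_lt_right one_pos) β
  have hcompact := Metric.tendstoUniformlyOn_iff.mp
    (tendstoUniformlyOn_div hl_cont hl_pos hl_sv (c := (max R 1)⁻¹) (d := δ⁻¹) (by positivity))
    (η / M) (div_pos hη hM)
  filter_upwards [hcompact, eventually_forall_div_le hl_cont hl_pos hl_sv (half_pos hβ),
    eventually_gt_atTop 0] with x hσ hpotter hx0
  rintro y ⟨hy0, hyR⟩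
  set σ := l (y⁻¹ * x) / l x
  have hσ0 : 0 < σ := div_pos (hl_pos _ (by positivity)) (hl_pos _ hx0)
  have hyβ : 0 < y ^ β := Real.rpow_pos_of_pos hy0 β
  rw [Real.dist_eq, show y ^ β - y ^ β * σ = y ^ β * (1 - σ) by ring, abs_mul, abs_of_pos hyβ]
  rcases le_or_gt δ y with hδy | hyδ
  · have hyM : y ^ β ≤ M := Real.rpow_le_rpow hy0.le (hyR.trans (le_max_left R 1)) hβ.le
    have h1σ : |1 - σ| < η / M := by
      simpa [Real.dist_eq] using hσ y⁻¹ ⟨inv_anti₀ hy0 (hyR.trans (le_max_left R 1)),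
        inv_anti₀ hδ0 hδy⟩
    calc y ^ β * |1 - σ| ≤ M * |1 - σ| := by gcongr
      _ < M * (η / M) := by gcongr
      _ = η := by field_simp
  · have hy1 : y ≤ 1 := hyδ.le.trans hδ1
    have hσy : y ^ β * σ ≤ Real.exp (β / 2) * y ^ (β / 2) := by
      have hpot := hpotter y⁻¹ (one_le_inv₀ hy0 |>.mpr hy1)
      have hsplit : y ^ β = y ^ (β / 2) * y ^ (β / 2) := by
        rw [← Real.rpow_add hy0]; ring_nf
      calc y ^ β * σ ≤ y ^ β * (Real.exp (β / 2) * y⁻¹ ^ (β / 2)) := by gcongr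
        _ = Real.exp (β / 2) * y ^ (β / 2) := by
          rw [hsplit, Real.inv_rpow hy0.le]
          field_simp
    have hyβ2 : y ^ β ≤ y ^ (β / 2) :=
      Real.rpow_le_rpow_of_exponent_ge hy0 hy1 (by linarith)
    have hδ2 : y ^ (β / 2) ≤ δ ^ (β / 2) := Real.rpow_le_rpow hy0.le hyδ.le (by positivity)
    have h1σ : |1 - σ| ≤ 1 + σ := (abs_sub _ _).trans_eq (by rw [abs_one, abs_of_pos hσ0])
    calc y ^ β * |1 - σ| ≤ y ^ β * (1 + σ) := by gcongr
      _ ≤ y ^ (β / 2) + Real.exp (β / 2) * y ^ (β / 2) := by linarith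
      _ ≤ C * δ ^ (β / 2) := by
        have := mul_le_mul_of_nonneg_left hδ2 (Real.exp_pos (β / 2)).le
        simp only [C]
        linarith
      _ < η := hδη

end Multiplicative

end SlowVariation

theorem tendsto_div_rpow_mul_of_eq_rpow_mul {a L l : ℝ → ℝ} {β A : ℝ} (hA : A ≠ 0)
    (hform : ∀ x > (0 : ℝ), a x = x ^ β * L x)
    (hL : Tendsto (fun x => L x / (A * l (1 / x))) (𝓝[>] 0) (𝓝 1)) :
    Tendsto (fun x => a x / (x ^ β * l (1 / x))) (𝓝[>] 0) (𝓝 A) := by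
  have hAL := hL.const_mul A
  rw [mul_one] at hAL
  refine hAL.congr' ?_
  filter_upwards [self_mem_nhdsWithin] with x (hx : 0 < x)
  rw [hform x hx, mul_div_mul_left _ _ (Real.rpow_pos_of_pos hx β).ne', mul_div_assoc',
    mul_div_mul_left _ _ hA]

section RegularVariation

variable {l : ℝ → ℝ} (hl_cont : ContinuousOn l (Ioi 0)) (hl_pos : ∀ x > (0 : ℝ), 0 < l x)
  (hl_sv : ∀ lam > (0 : ℝ), Tendsto (fun x => l (lam * x) / l x) atTop (𝓝 1))
  {a : ℝ → ℝ} {β A : ℝ}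

include hl_cont hl_pos hl_sv

theorem tendstoUniformlyOn_div_rpow_mul (hβ : 0 < β) (ha0 : a 0 = 0)
    (ha : Tendsto (fun x => a x / (x ^ β * l (1 / x))) (𝓝[>] 0) (𝓝 A)) (R : ℝ) :
    TendstoUniformlyOn (fun x y => a (x * y) / (x ^ β * l (1 / x))) (fun y => A * y ^ β)
      (𝓝[>] 0) (Icc 0 R) := by
  have hzero : TendstoUniformlyOn (fun x y => a (x * y) / (x ^ β * l (1 / x)))
      (fun y => A * y ^ β) (𝓝[>] 0) {0} := by
    rw [tendstoUniformlyOn_singleton_iff_tendsto]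
    simp [ha0, Real.zero_rpow hβ.ne']
  have hIoc := (tendstoUniformlyOn_comp_mul ha R).mul_of_bounded
    ((SlowVariation.tendstoUniformlyOn_rpow_mul_div hl_cont hl_pos hl_sv hβ).comp_tendsto
      tendsto_inv_nhdsGT_zero) (Cf := |A|) (Cg := max R 1 ^ β) (fun _ _ => le_rfl)
    (fun y ⟨hy0, hyR⟩ => by
      rw [Real.norm_eq_abs, abs_of_pos (Real.rpow_pos_of_pos hy0 β)]
      exact Real.rpow_le_rpow hy0.le (hyR.trans (le_max_left R 1)) hβ.le)
  refine (hzero.union (hIoc.congr ?_)).mono fun y hy =>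
    hy.1.eq_or_lt.elim (fun h => Or.inl h.symm) fun h => Or.inr ⟨h, hy.2⟩
  filter_upwards [self_mem_nhdsWithin] with x (hx : 0 < x) y hy
  obtain ⟨hy0, -⟩ := hy
  have hlx := hl_pos (1 / x) (by positivity)
  have hlxy := hl_pos (1 / (x * y)) (by positivity)
  dsimp only
  rw [Real.mul_rpow hx.le hy0.le, ← mul_inv_rev, ← one_div, ← one_div]
  field_simp

theorem tendstoUniformlyOn_rescaled (hβ : 0 < β) (ha0 : a 0 = 0)
    (ha : Tendsto (fun x => a x / (x ^ β * l (1 / x))) (𝓝[>] 0) (𝓝 A)) {ι : Type*}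
    {p : Filter ι} {e' e'' : ι → ℝ} (he'' : Tendsto e'' p (𝓝[>] 0))
    (hratio : Tendsto (fun ε => (e'' ε / e' ε) / ((e'' ε) ^ β * l (1 / e'' ε))) p (𝓝 1))
    (R : ℝ) :
    TendstoUniformlyOn (fun ε y => (e' ε / e'' ε) * a (e'' ε * y)) (fun y => A * y ^ β) p
      (Icc 0 R) := by
  have hprod := ((hratio.inv₀ one_ne_zero).tendstoUniformlyOn_const (Icc 0 R)).mul_of_bounded
    ((tendstoUniformlyOn_div_rpow_mul hl_cont hl_pos hl_sv hβ ha0 ha R).comp_tendsto he'')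
    (Cf := 1) (Cg := |A| * max R 1 ^ β) (fun _ _ => by simp)
    (fun y ⟨hy0, hyR⟩ => by
      rw [norm_mul, Real.norm_eq_abs, Real.norm_eq_abs, abs_of_nonneg (Real.rpow_nonneg hy0 β)]
      gcongr
      exact hyR.trans (le_max_left R 1))
  refine (hprod.congr ?_).congr_right fun y _ => by simp
  filter_upwards [he''.eventually self_mem_nhdsWithin] with ε (hε : 0 < e'' ε) y _
  have hl := hl_pos (1 / e'' ε) (by positivity)
  have := Real.rpow_pos_of_pos hε β
  simp only [inv_div]
  field_simp

end RegularVariation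

theorem stmt_15_general (a : ℝ → ℝ) (β Ap Am : ℝ)
    (hβ : β ∈ Set.Ioo (0:ℝ) 1) (hAp : 0 < Ap) (hAm : 0 < Am)
    (ha0 : a 0 = 0)
    (Lp Lm l : ℝ → ℝ)
    (hform_p : ∀ x > (0:ℝ), a x = x ^ β * Lp x)
    (hform_m : ∀ x < (0:ℝ), a x = -(|x| ^ β * Lm |x|))
    (hl_cont : ContinuousOn l (Set.Ioi 0)) (hl_pos : ∀ x > (0:ℝ), 0 < l x)
    (hl_sv : ∀ lam > (0:ℝ), Tendsto (fun x => l (lam * x) / l x) atTop (nhds 1))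
    (hLp_asymp : Tendsto (fun x => Lp x / (Ap * l (1 / x))) (nhdsWithin 0 (Set.Ioi 0)) (nhds 1))
    (hLm_asymp : Tendsto (fun x => Lm x / (Am * l (1 / x))) (nhdsWithin 0 (Set.Ioi 0)) (nhds 1))
    (e' e'' : ℝ → ℝ)
    (hpos : ∀ ε ∈ Set.Ioc (0:ℝ) 1, 0 < e' ε ∧ 0 < e'' ε)
    (he'' : Tendsto e'' (nhdsWithin 0 (Set.Ioi 0)) (nhds 0))
    (hratio : Tendsto (fun ε => (e'' ε / e' ε) / ((e'' ε) ^ β * l (1 / e'' ε)))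
      (nhdsWithin 0 (Set.Ioi 0)) (nhds 1)) :
    ∀ R > (0:ℝ),
      TendstoUniformlyOn (fun ε y => (e' ε / e'' ε) * a (e'' ε * y))
        (fun y => if 0 ≤ y then Ap * y ^ β else -(Am * |y| ^ β))
        (nhdsWithin 0 (Set.Ioi 0)) (Set.Icc (-R) R) := by
  intro R hR
  have he''pos : Tendsto e'' (𝓝[>] 0) (𝓝[>] 0) := tendsto_nhdsWithin_iff.mpr
    ⟨he'', by filter_upwards [Ioc_mem_nhdsGT one_pos] with ε hε using (hpos ε hε).2⟩
  have hright := tendstoUniformlyOn_rescaled hl_cont hl_pos hl_sv hβ.1 ha0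
    (tendsto_div_rpow_mul_of_eq_rpow_mul hAp.ne' hform_p hLp_asymp) he''pos hratio R
  have hleft := tendstoUniformlyOn_rescaled hl_cont hl_pos hl_sv hβ.1 (a := fun x => -a (-x))
    (by simp [ha0]) (tendsto_div_rpow_mul_of_eq_rpow_mul hAm.ne'
      (fun x hx => by simp [hform_m (-x) (neg_lt_zero.mpr hx), abs_of_pos hx]) hLm_asymp)
    he''pos hratio R
  rw [← Icc_union_Icc_eq_Icc (neg_nonpos.mpr hR.le) hR.le]
  refine TendstoUniformlyOn.union ?_ (hright.congr_right fun y hy => by simp [hy.1])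
  have hreflect := (hleft.comp Neg.neg).neg
  rw [show Neg.neg ⁻¹' Icc (0 : ℝ) R = Icc (-R) 0 by simp] at hreflect
  refine (hreflect.congr (Eventually.of_forall fun ε y _ => by simp)).congr_right fun y hy => ?_
  rcases hy.2.eq_or_lt with rfl | hy0
  · simp [Real.zero_rpow hβ.1.ne']
  · simp [hy0.not_ge, abs_of_neg hy0]

/-- Uniform convergence on compacts of the rescaled drift
`a_ε(y) = (ε'/ε'')·a(ε''·y)` to the model drift `ā(y) = ±A_±|y|^β`. -/
theorem stmt_15 (a : ℝ → ℝ) (β Ap Am Cg : ℝ)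
    (hβ : β ∈ Set.Ioo (0:ℝ) 1) (hAp : 0 < Ap) (hAm : 0 < Am) (hCg : 0 < Cg)
    (ha_cont : Continuous a) (ha0 : a 0 = 0)
    (hgrowth : ∀ x, |a x| ≤ Cg * (1 + |x|))
    (Lp Lm l : ℝ → ℝ)
    (hLp_cont : ContinuousOn Lp (Set.Ioi 0)) (hLp_pos : ∀ x > (0:ℝ), 0 < Lp x)
    (hLm_cont : ContinuousOn Lm (Set.Ioi 0)) (hLm_pos : ∀ x > (0:ℝ), 0 < Lm x)
    (hform_p : ∀ x > (0:ℝ), a x = x ^ β * Lp x)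
    (hform_m : ∀ x < (0:ℝ), a x = -(|x| ^ β * Lm |x|))
    (hl_cont : ContinuousOn l (Set.Ioi 0)) (hl_pos : ∀ x > (0:ℝ), 0 < l x)
    (hl_sv : ∀ lam > (0:ℝ), Tendsto (fun x => l (lam * x) / l x) atTop (nhds 1))
    (hLp_asymp : Tendsto (fun x => Lp x / (Ap * l (1 / x))) (nhdsWithin 0 (Set.Ioi 0)) (nhds 1))
    (hLm_asymp : Tendsto (fun x => Lm x / (Am * l (1 / x))) (nhdsWithin 0 (Set.Ioi 0)) (nhds 1))
    (e' e'' : ℝ → ℝ)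
    (hpos : ∀ ε ∈ Set.Ioc (0:ℝ) 1, 0 < e' ε ∧ 0 < e'' ε)
    (he'' : Tendsto e'' (nhdsWithin 0 (Set.Ioi 0)) (nhds 0))
    (hratio : Tendsto (fun ε => (e'' ε / e' ε) / ((e'' ε) ^ β * l (1 / e'' ε)))
      (nhdsWithin 0 (Set.Ioi 0)) (nhds 1)) :
    ∀ R > (0:ℝ),
      TendstoUniformlyOn (fun ε y => (e' ε / e'' ε) * a (e'' ε * y))
        (fun y => if 0 ≤ y then Ap * y ^ β else -(Am * |y| ^ β))
        (nhdsWithin 0 (Set.Ioi 0)) (Set.Icc (-R) R) :=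
  stmt_15_general a β Ap Am hβ hAp hAm ha0 Lp Lm l hform_p hform_m hl_cont hl_pos hl_sv hLp_asymp
    hLm_asymp e' e'' hpos he'' hratio
end

section
/- Suppose ε ↦ ε'(ε) and ε ↦ ε''(ε) are continuous functions from (0,1] to (0,∞) such that, as ε → 0+, ε'(ε) → 0, ε/ε''(ε) → ∞, and ε'(ε)·(ε/ε''(ε))^α·l_ν(ε/ε''(ε)) → 1, where α ∈ (1,2) and l_ν : (0,∞) → (0,∞) is continuous and slowly varying at infinity. Then for every δ > 0 there exists a constant C > 0 such that ε/ε''(ε) ≤ C·(ε'(ε))^{−1/α − δ} for all ε ∈ (0,1]. -/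
open Filter Set

lemma sv_lower (lν : ℝ → ℝ) (hcont : ContinuousOn lν (Set.Ioi 0))
    (hpos : ∀ x > (0:ℝ), 0 < lν x)
    (hsv : Tendsto (fun x => lν (2 * x) / lν x) atTop (nhds 1))
    (η : ℝ) (hη : 0 < η) :
    ∃ c > (0:ℝ), ∃ X ≥ (1:ℝ), ∀ y ≥ X, c * y ^ (-η) ≤ lν y := by
  have h2η : (2:ℝ) ^ (-η) < 1 :=
    Real.rpow_lt_one_of_one_lt_of_neg one_lt_two (neg_neg_of_pos hη)
  have hev : ∀ᶠ x in atTop, (2:ℝ) ^ (-η) < lν (2 * x) / lν x :=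
    hsv.eventually (eventually_gt_nhds h2η)
  obtain ⟨X₀, hX₀⟩ := hev.exists_forall_of_atTop
  set X := max X₀ 1 with hXdef
  have hX1 : (1:ℝ) ≤ X := le_max_right _ _
  have hXpos : (0:ℝ) < X := lt_of_lt_of_le one_pos hX1
  have step : ∀ x ≥ X, (2:ℝ) ^ (-η) * lν x ≤ lν (2 * x) := by
    intro x hx
    have hxpos : 0 < x := lt_of_lt_of_le hXpos hx
    have h := hX₀ x (le_trans (le_max_left _ _) hx)
    have hlx : 0 < lν x := hpos x hxpos
    calc (2:ℝ) ^ (-η) * lν x ≤ (lν (2 * x) / lν x) * lν x := by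
          exact mul_le_mul_of_nonneg_right h.le hlx.le
      _ = lν (2 * x) := by field_simp
  have iter : ∀ n : ℕ, ∀ x ≥ X, (2:ℝ) ^ (-(n:ℝ) * η) * lν x ≤ lν (2 ^ n * x) := by
    intro n
    induction n with
    | zero => intro x hx; simp
    | succ n ih =>
      intro x hx
      have hxpos : 0 < x := lt_of_lt_of_le hXpos hx
      have h2n : X ≤ 2 ^ n * x := by
        calc X ≤ x := hx
          _ = 1 * x := (one_mul x).symm
          _ ≤ 2 ^ n * x := by
            apply mul_le_mul_of_nonneg_right _ hxpos.le
            exact one_le_pow₀ (by norm_num : (1:ℝ) ≤ 2)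
      have h1 := step (2 ^ n * x) h2n
      have h2 := ih x hx
      have key : (2:ℝ) ^ (-((n:ℝ)+1) * η) * lν x
          ≤ (2:ℝ) ^ (-η) * ((2:ℝ) ^ (-(n:ℝ) * η) * lν x) := by
        rw [← mul_assoc, ← Real.rpow_add two_pos]
        ring_nf
        exact le_refl _
      push_cast
      calc (2:ℝ) ^ (-((n:ℝ)+1) * η) * lν x
          ≤ (2:ℝ) ^ (-η) * ((2:ℝ) ^ (-(n:ℝ) * η) * lν x) := key
        _ ≤ (2:ℝ) ^ (-η) * lν (2 ^ n * x) :=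
            mul_le_mul_of_nonneg_left h2 (Real.rpow_nonneg (by norm_num) _)
        _ ≤ lν (2 * (2 ^ n * x)) := h1
        _ = lν (2 ^ (n+1) * x) := by ring_nf
  -- minimum of lν on [X, 2X]
  have hK : IsCompact (Set.Icc X (2*X)) := isCompact_Icc
  have hne : (Set.Icc X (2*X)).Nonempty := ⟨X, le_refl _, by nlinarith⟩
  have hsub : Set.Icc X (2*X) ⊆ Set.Ioi 0 := fun t ht => lt_of_lt_of_le hXpos ht.1
  obtain ⟨z, hz, hzmin⟩ := hK.exists_isMinOn hne (hcont.mono hsub)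
  set m := lν z with hm
  have hmpos : 0 < m := hpos z (hsub hz)
  have hXη : (0:ℝ) < X ^ η := Real.rpow_pos_of_pos hXpos η
  refine ⟨m * X ^ η, by positivity, X, hX1, ?_⟩
  intro y hy
  have hypos : 0 < y := lt_of_lt_of_le hXpos hy
  have hyX : 1 ≤ y / X := (one_le_div hXpos).2 hy
  have hyXpos : 0 < y / X := lt_of_lt_of_le one_pos hyX
  set n := ⌊Real.logb 2 (y/X)⌋₊ with hn
  have hlogb : 0 ≤ Real.logb 2 (y/X) := Real.logb_nonneg one_lt_two hyX
  have h1 : (2:ℝ)^(n:ℝ) ≤ y / X := by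
    calc (2:ℝ)^(n:ℝ) ≤ (2:ℝ)^(Real.logb 2 (y/X)) :=
        Real.rpow_le_rpow_of_exponent_le one_le_two (Nat.floor_le hlogb)
      _ = y / X := Real.rpow_logb two_pos (by norm_num) hyXpos
  have h2 : y / X < (2:ℝ)^((n:ℝ)+1) := by
    calc y / X = (2:ℝ)^(Real.logb 2 (y/X)) :=
        (Real.rpow_logb two_pos (by norm_num) hyXpos).symm
      _ < (2:ℝ)^((n:ℝ)+1) := Real.rpow_lt_rpow_of_exponent_lt one_lt_two
          (Nat.lt_floor_add_one _)
  have hpow : ((2:ℝ)^(n:ℝ)) = (2:ℝ)^(n:ℕ) := Real.rpow_natCast 2 n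
  have hpownn : (0:ℝ) < (2:ℝ)^(n:ℕ) := by positivity
  set x := y / 2^n with hxdef
  have hxX : X ≤ x := by
    rw [hxdef, le_div_iff₀ hpownn]
    rw [hpow] at h1
    calc X * 2^n = 2^n * X := by ring
      _ ≤ (y/X) * X := mul_le_mul_of_nonneg_right h1 hXpos.le
      _ = y := by field_simp
  have hx2X : x ≤ 2*X := by
    rw [hxdef, div_le_iff₀ hpownn]
    rw [show ((n:ℝ)+1) = ((n+1:ℕ):ℝ) by push_cast; ring, Real.rpow_natCast] at h2
    have h2' : y < 2 ^ (n+1) * X := by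
      have := mul_lt_mul_of_pos_right h2 hXpos
      rwa [div_mul_cancel₀ _ (ne_of_gt hXpos)] at this
    calc y ≤ 2 ^ (n+1) * X := h2'.le
      _ = 2 * X * 2 ^ n := by ring
  have hyx : y = 2^n * x := by rw [hxdef]; field_simp
  have hiter := iter n x hxX
  have hmx : m ≤ lν x := hzmin ⟨hxX, hx2X⟩
  have hexp : (2:ℝ) ^ (-(n:ℝ) * η) = ((2:ℝ)^(n:ℝ)) ^ (-η) := by
    rw [← Real.rpow_mul (by norm_num : (0:ℝ) ≤ 2)]
    ring_nf
  have hanti : (y/X) ^ (-η) ≤ ((2:ℝ)^(n:ℝ)) ^ (-η) := by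
    rw [Real.rpow_neg hyXpos.le, Real.rpow_neg (by positivity)]
    apply inv_anti₀ (Real.rpow_pos_of_pos (by positivity) η)
    exact Real.rpow_le_rpow (by positivity) h1 hη.le
  have hdiv : (y/X) ^ (-η) = y ^ (-η) * X ^ η := by
    rw [Real.div_rpow hypos.le hXpos.le, Real.rpow_neg hXpos.le]
    field_simp
  calc m * X ^ η * y ^ (-η) = (y/X) ^ (-η) * m := by rw [hdiv]; ring
    _ ≤ ((2:ℝ)^(n:ℝ)) ^ (-η) * m := mul_le_mul_of_nonneg_right hanti hmpos.le
    _ = (2:ℝ) ^ (-(n:ℝ) * η) * m := by rw [hexp]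
    _ ≤ (2:ℝ) ^ (-(n:ℝ) * η) * lν x :=
        mul_le_mul_of_nonneg_left hmx (Real.rpow_nonneg (by norm_num) _)
    _ ≤ lν (2^n * x) := hiter
    _ = lν y := by rw [← hyx]

/-- Power bound for the noise-rescaling factor: for every `δ > 0` there is
`C > 0` with `ε/ε''(ε) ≤ C·(ε'(ε))^{−1/α−δ}` for all `ε ∈ (0,1]`. -/
theorem stmt_16 (α : ℝ) (hα : α ∈ Set.Ioo (1:ℝ) 2)
    (lν : ℝ → ℝ)
    (hlν_cont : ContinuousOn lν (Set.Ioi 0)) (hlν_pos : ∀ x > (0:ℝ), 0 < lν x)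
    (hlν_sv : ∀ lam > (0:ℝ), Tendsto (fun x => lν (lam * x) / lν x) atTop (nhds 1))
    (e' e'' : ℝ → ℝ)
    (he'_cont : ContinuousOn e' (Set.Ioc 0 1)) (he''_cont : ContinuousOn e'' (Set.Ioc 0 1))
    (hpos : ∀ ε ∈ Set.Ioc (0:ℝ) 1, 0 < e' ε ∧ 0 < e'' ε)
    (he' : Tendsto e' (nhdsWithin 0 (Set.Ioi 0)) (nhds 0))
    (hee'' : Tendsto (fun ε => ε / e'' ε) (nhdsWithin 0 (Set.Ioi 0)) atTop)
    (hscale : Tendsto (fun ε => e' ε * (ε / e'' ε) ^ α * lν (ε / e'' ε))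
      (nhdsWithin 0 (Set.Ioi 0)) (nhds 1)) :
    ∀ δ > (0:ℝ), ∃ C > (0:ℝ), ∀ ε ∈ Set.Ioc (0:ℝ) 1,
      ε / e'' ε ≤ C * (e' ε) ^ (-1 / α - δ) := by
  obtain ⟨hα1, hα2⟩ := hα
  intro δ hδ
  set η := min (δ/2) (α/2) with hηdef
  have hηpos : 0 < η := lt_min (by linarith) (by linarith)
  have hηδ : η ≤ δ/2 := min_le_left _ _
  have hηα : η ≤ α/2 := min_le_right _ _
  have hαη : 0 < α - η := by linarith
  obtain ⟨c, hc, X, hX1, hsvl⟩ := sv_lower lν hlν_cont hlν_pos (hlν_sv 2 two_pos) η hηpos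
  -- exponent comparison
  have hexp_le : -1/α - δ ≤ -(1/(α-η)) := by
    have hαpos : (0:ℝ) < α := by linarith
    have key : 1/(α-η) ≤ 1/α + δ := by
      rw [div_le_iff₀ hαη]
      have h1 : (1/α + δ) * (α - η) = 1 - η/α + δ*(α-η) := by field_simp
      rw [h1]
      have h2 : η/α ≤ η := div_le_self hηpos.le (by linarith)
      nlinarith
    have : -1/α = -(1/α) := by ring
    linarith
  -- eventual bound near zero
  have hev : ∀ᶠ ε in nhdsWithin (0:ℝ) (Set.Ioi 0),
      e' ε ≤ 1 ∧ X ≤ ε / e'' ε ∧ e' ε * (ε / e'' ε) ^ α * lν (ε / e'' ε) ≤ 2 := by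
    filter_upwards [he'.eventually (eventually_le_nhds (by norm_num : (0:ℝ) < 1)),
      hee''.eventually (eventually_ge_atTop X),
      hscale.eventually (eventually_le_nhds one_lt_two)] with ε h1 h2 h3
    exact ⟨h1, h2, h3⟩
  obtain ⟨a₀, ha₀, hsubset⟩ := mem_nhdsGT_iff_exists_Ioo_subset.1 hev
  set a := min a₀ 1 with hadef
  have hapos : 0 < a := lt_min ha₀ one_pos
  have ha1 : a ≤ 1 := min_le_right _ _
  set K₀ := (2/c) ^ (1/(α-η)) with hK₀def
  have hK₀pos : 0 < K₀ := Real.rpow_pos_of_pos (by positivity) _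
  -- compact part
  set F := fun ε => (ε / e'' ε) * (e' ε) ^ (1/α + δ) with hFdef
  have hKsub : Set.Icc (a/2) 1 ⊆ Set.Ioc (0:ℝ) 1 :=
    fun t ht => ⟨lt_of_lt_of_le (by positivity) ht.1, ht.2⟩
  have hFcont : ContinuousOn F (Set.Icc (a/2) 1) := by
    apply ContinuousOn.mul
    · exact continuousOn_id.div (he''_cont.mono hKsub)
        (fun t ht => ne_of_gt (hpos t (hKsub ht)).2)
    · exact (he'_cont.mono hKsub).rpow_const
        (fun t ht => Or.inl (ne_of_gt (hpos t (hKsub ht)).1))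
  have hne : (Set.Icc (a/2) 1).Nonempty := ⟨1, by constructor <;> linarith⟩
  obtain ⟨z, hz, hzmax⟩ := isCompact_Icc.exists_isMaxOn hne hFcont
  set C := max K₀ (F z) with hCdef
  have hCpos : 0 < C := lt_of_lt_of_le hK₀pos (le_max_left _ _)
  refine ⟨C, hCpos, ?_⟩
  intro ε hε
  obtain ⟨he'p, he''p⟩ := hpos ε hε
  have hR : (0:ℝ) < (e' ε) ^ (-1/α - δ) := Real.rpow_pos_of_pos he'p _
  by_cases hcase : ε < a
  · -- asymptotic regime
    obtain ⟨h1, h2, h3⟩ := hsubset ⟨hε.1, lt_of_lt_of_le hcase (min_le_left _ _)⟩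
    set g := ε / e'' ε with hgdef
    have hg1 : (1:ℝ) ≤ g := le_trans hX1 h2
    have hgpos : 0 < g := lt_of_lt_of_le one_pos hg1
    have hlg : c * g ^ (-η) ≤ lν g := hsvl g h2
    have hmain : e' ε * c * g ^ (α - η) ≤ 2 := by
      have hnn : 0 ≤ e' ε * g ^ α := by positivity
      calc e' ε * c * g ^ (α - η) = (e' ε * g ^ α) * (c * g ^ (-η)) := by
            rw [show α - η = α + (-η) by ring, Real.rpow_add hgpos]; ring
        _ ≤ (e' ε * g ^ α) * lν g := mul_le_mul_of_nonneg_left hlg hnn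
        _ = e' ε * g ^ α * lν g := rfl
        _ ≤ 2 := h3
    have hgle : g ^ (α - η) ≤ (2/c) / e' ε := by
      rw [div_div, le_div_iff₀ (by positivity)]
      calc g ^ (α-η) * (c * e' ε) = e' ε * c * g ^ (α-η) := by ring
        _ ≤ 2 := hmain
    have hgle2 : g ≤ K₀ * (e' ε) ^ (-(1/(α-η))) := by
      have h4 : g = (g ^ (α-η)) ^ (1/(α-η)) := by
        rw [← Real.rpow_mul hgpos.le, mul_one_div, div_self (ne_of_gt hαη), Real.rpow_one]
      rw [h4]
      calc (g ^ (α-η)) ^ (1/(α-η)) ≤ ((2/c) / e' ε) ^ (1/(α-η)) :=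
            Real.rpow_le_rpow (Real.rpow_nonneg hgpos.le _) hgle (by positivity)
        _ = K₀ * (e' ε) ^ (-(1/(α-η))) := by
            rw [Real.div_rpow (by positivity) he'p.le, Real.rpow_neg he'p.le]
            rfl
    have hexp2 : (e' ε) ^ (-(1/(α-η))) ≤ (e' ε) ^ (-1/α - δ) :=
      Real.rpow_le_rpow_of_exponent_ge he'p h1 hexp_le
    calc ε / e'' ε ≤ K₀ * (e' ε) ^ (-(1/(α-η))) := hgle2
      _ ≤ K₀ * (e' ε) ^ (-1/α - δ) := mul_le_mul_of_nonneg_left hexp2 hK₀pos.le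
      _ ≤ C * (e' ε) ^ (-1/α - δ) :=
          mul_le_mul_of_nonneg_right (le_max_left _ _) hR.le
  · -- compact regime
    push_neg at hcase
    have hεK : ε ∈ Set.Icc (a/2) 1 := ⟨le_trans (by linarith) hcase, hε.2⟩
    have hF : F ε ≤ F z := hzmax hεK
    have hrp : (0:ℝ) < (e' ε) ^ (1/α + δ) := Real.rpow_pos_of_pos he'p _
    have hinv : ((e' ε) ^ (1/α + δ))⁻¹ = (e' ε) ^ (-1/α - δ) := by
      rw [← Real.rpow_neg he'p.le]
      congr 1
      ring
    have hg : ε / e'' ε = F ε * (e' ε) ^ (-1/α - δ) := by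
      rw [hFdef, ← hinv]
      field_simp
    have : ε / e'' ε ≤ F z * (e' ε) ^ (-1/α - δ) := by
      rw [hg]
      exact mul_le_mul_of_nonneg_right hF hR.le
    calc ε / e'' ε ≤ F z * (e' ε) ^ (-1/α - δ) := this
      _ ≤ C * (e' ε) ^ (-1/α - δ) :=
          mul_le_mul_of_nonneg_right (le_max_right _ _) hR.le
end
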